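/- arXiv:2602.14179 — 4 statements merged into one kernel-verified Lean document; each statement's English description precedes it below -/
import Mathlib

section
/- If all the constituent paths of a melon graph M have odd length and length at least three, then the permutation-representation number of M is at most 3. -/
open SimpleGraph

variable {V : Type*}

/-- Two letters `a` and `b` alternate in the word `w`. -/
def Alternates [DecidableEq V] (w : List V) (a b : V) : Prop :=
  (w.filter fun x => decide (x = a ∨ x = b)).Chain' (· ≠ ·)

/-- The word `w` represents the simple graph `G`. -/
def Represents [DecidableEq V] (G : SimpleGraph V) (w : List V) : Prop :=
  (∀ v : V, v ∈ w) ∧ ∀ a b : V, a ≠ b → (G.Adj a b ↔ Alternates w a b)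

/-- `G` is representable by a `k`-uniform word. -/
def KWordRepresentable [DecidableEq V] (G : SimpleGraph V) (k : ℕ) : Prop :=
  ∃ w : List V, (∀ v : V, w.count v = k) ∧ Represents G w

def WordRepresentable [DecidableEq V] (G : SimpleGraph V) : Prop :=
  ∃ w : List V, Represents G w

/-- The representation number of `G`. -/
noncomputable def repNum [DecidableEq V] (G : SimpleGraph V) : ℕ :=
  sInf {k | KWordRepresentable G k}

/-- `G` is permutationally `k`-representable. -/
def PermRepresentable [DecidableEq V] (G : SimpleGraph V) (k : ℕ) : Prop :=
  ∃ ps : Fin k → List V, (∀ i, ∀ v : V, (ps i).count v = 1) ∧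
    Represents G (List.ofFn ps).flatten

/-- The permutation-representation number of `G`. -/
noncomputable def permRepNum [DecidableEq V] (G : SimpleGraph V) : ℕ :=
  sInf {k | PermRepresentable G k}

/-- `G` is a melon graph with `m` constituent paths `P i` joining the endpoints `x` and `y`. -/
structure IsMelon (G : SimpleGraph V) (m : ℕ) (x y : V)
    (P : Fin m → G.Walk x y) : Prop where
  one_le_m : 1 ≤ m
  ne : x ≠ y
  isPath : ∀ i, (P i).IsPath
  one_le_length : ∀ i, 1 ≤ (P i).length
  internallyDisjoint : ∀ i j, i ≠ j →
    ∀ v, v ∈ (P i).support → v ∈ (P j).support → v = x ∨ v = y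
  support_cover : ∀ v, ∃ i, v ∈ (P i).support
  edge_cover : ∀ e, e ∈ G.edgeSet → ∃ i, e ∈ (P i).edges
  at_most_one_short : ∀ i j, (P i).length = 1 → (P j).length = 1 → i = j

/-- `G` is a melon graph. -/
def IsMelonGraph (G : SimpleGraph V) : Prop :=
  ∃ (m : ℕ) (x y : V) (P : Fin m → G.Walk x y), IsMelon G m x y P

/-- A transitive orientation of the edges of `G`, i.e. `G` is a comparability graph. -/
def HasTransitiveOrientation (G : SimpleGraph V) : Prop :=
  ∃ r : V → V → Prop, (∀ a b, r a b → G.Adj a b) ∧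
    (∀ a b, G.Adj a b → (r a b ↔ ¬ r b a)) ∧
    (∀ a b c, r a b → r b c → r a c)


section Aux
variable [DecidableEq V] {a b : V}

lemma aux_nil (hab : a ≠ b) : ∀ (l : List V), (∀ x ∈ l, x = a ∨ x = b) →
    l.count a = 0 → l.count b = 0 → l = [] := by
  intro l
  induction l with
  | nil => simp
  | cons c t ih =>
    intro hmem hca hcb
    rcases hmem c (by simp) with rfl | rfl <;> simp [List.count_cons] at hca hcb

lemma aux_single (hab : a ≠ b) : ∀ (l : List V), (∀ x ∈ l, x = a ∨ x = b) →
    l.count a = 0 → l.count b = 1 → l = [b] := by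
  intro l
  induction l with
  | nil => simp
  | cons c t ih =>
    intro hmem hca hcb
    have hm : ∀ x ∈ t, x = a ∨ x = b := fun x hx => hmem x (by simp [hx])
    rcases hmem c (by simp) with rfl | rfl
    · simp [List.count_cons] at hca
    · simp [List.count_cons, hab, Ne.symm hab] at hca hcb
      rw [aux_nil hab t hm hca hcb]

lemma aux_pair (hab : a ≠ b) : ∀ (l : List V), (∀ x ∈ l, x = a ∨ x = b) →
    l.count a = 1 → l.count b = 1 → l = [a, b] ∨ l = [b, a] := by
  intro l
  induction l with
  | nil => simp
  | cons c t ih =>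
    intro hmem hca hcb
    have hm : ∀ x ∈ t, x = a ∨ x = b := fun x hx => hmem x (by simp [hx])
    rcases hmem c (by simp) with rfl | rfl
    · simp [List.count_cons, hab, Ne.symm hab] at hca hcb
      left
      rw [aux_single hab t hm hca hcb]
    · simp [List.count_cons, hab, Ne.symm hab] at hca hcb
      right
      rw [aux_single (Ne.symm hab) t (fun x hx => (hm x hx).symm) hcb hca]

end Aux

section Keys
variable [DecidableEq V]

lemma filter_pair {key : V → Lex (ℤ × ℤ)} (hinj : Function.Injective key)
    {l : List V} (hs : l.Pairwise (fun u v => key u ≤ key v))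
    {a b : V} (hab : a ≠ b) (ha : l.count a = 1) (hb : l.count b = 1) :
    l.filter (fun x => decide (x = a ∨ x = b)) =
      if key a < key b then [a, b] else [b, a] := by
  set pr : V → Bool := fun x => decide (x = a ∨ x = b) with hpr
  have hps : (l.filter pr).Pairwise (fun u v => key u ≤ key v) :=
    List.Pairwise.sublist (List.filter_sublist (l := l)) hs
  have hmem : ∀ x ∈ l.filter pr, x = a ∨ x = b := by
    intro x hx
    simpa [hpr] using List.of_mem_filter hx
  have hca : (l.filter pr).count a = 1 := by
    rw [List.count_filter (by simp [hpr])]; exact ha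
  have hcb : (l.filter pr).count b = 1 := by
    rw [List.count_filter (by simp [hpr])]; exact hb
  rcases aux_pair hab _ hmem hca hcb with h | h <;> rw [h] <;> rw [h] at hps
  · have hle : key a ≤ key b := by
      simpa [List.pairwise_cons] using hps
    rw [if_pos (lt_of_le_of_ne hle (fun e => hab (hinj e)))]
  · have hle : key b ≤ key a := by
      simpa [List.pairwise_cons] using hps
    rw [if_neg (not_lt.mpr hle)]

set_option maxHeartbeats 1000000 in
lemma perm3 [Fintype V] (G : SimpleGraph V) (k0 k1 k2 : V → Lex (ℤ × ℤ))
    (h0 : Function.Injective k0) (h1 : Function.Injective k1)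
    (h2 : Function.Injective k2)
    (hadj : ∀ a b, a ≠ b → (G.Adj a b ↔
      ((k0 a < k0 b ∧ k1 a < k1 b ∧ k2 a < k2 b) ∨
       (k0 b < k0 a ∧ k1 b < k1 a ∧ k2 b < k2 a)))) :
    PermRepresentable G 3 := by
  classical
  have mkl : ∀ (k : V → Lex (ℤ × ℤ)), ∃ l : List V,
      (∀ v, l.count v = 1) ∧ l.Pairwise (fun u v => k u ≤ k v) := by
    intro k
    refine ⟨(Finset.univ.toList (α := V)).mergeSort
      (fun u v => decide (k u ≤ k v)), ?_, ?_⟩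
    · intro v
      rw [(List.mergeSort_perm (Finset.univ.toList (α := V))
        (fun u v => decide (k u ≤ k v))).count_eq]
      exact List.count_eq_one_of_mem (Finset.nodup_toList _) (by simp)
    · have := List.pairwise_mergeSort (le := fun u v => decide (k u ≤ k v))
        (fun a b c hab hbc => by
          simp only [decide_eq_true_eq] at *; exact le_trans hab hbc)
        (fun a b => by
          simp only [Bool.or_eq_true, decide_eq_true_eq]; exact le_total (k a) (k b))
        (Finset.univ.toList (α := V))
      exact this.imp (by simp)
  obtain ⟨l0, hc0, hs0⟩ := mkl k0
  obtain ⟨l1, hc1, hs1⟩ := mkl k1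
  obtain ⟨l2, hc2, hs2⟩ := mkl k2
  refine ⟨![l0, l1, l2], ?_, ?_, ?_⟩
  · intro i v
    fin_cases i <;> simp [hc0 v, hc1 v, hc2 v]
  · intro v
    have : v ∈ l0 := List.count_pos_iff.mp (by rw [hc0 v]; norm_num)
    simp only [List.mem_flatten, List.mem_ofFn]
    exact ⟨l0, ⟨0, rfl⟩, this⟩
  · intro a b hab
    rw [hadj a b hab]
    have hflat : (List.ofFn ![l0, l1, l2]).flatten = l0 ++ (l1 ++ (l2 ++ [])) := by
      simp [List.ofFn_succ]
    unfold Alternates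
    rw [hflat]
    simp only [List.filter_append, List.filter_nil]
    rw [filter_pair h0 hs0 hab (hc0 a) (hc0 b),
        filter_pair h1 hs1 hab (hc1 a) (hc1 b),
        filter_pair h2 hs2 hab (hc2 a) (hc2 b)]
    have o0 := lt_or_gt_of_ne (fun e => hab (h0 e))
    have o1 := lt_or_gt_of_ne (fun e => hab (h1 e))
    have o2 := lt_or_gt_of_ne (fun e => hab (h2 e))
    rcases o0 with c0 | c0 <;> rcases o1 with c1 | c1 <;> rcases o2 with c2 | c2 <;>
      [ rw [if_pos c0, if_pos c1, if_pos c2];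
        rw [if_pos c0, if_pos c1, if_neg (asymm c2)];
        rw [if_pos c0, if_neg (asymm c1), if_pos c2];
        rw [if_pos c0, if_neg (asymm c1), if_neg (asymm c2)];
        rw [if_neg (asymm c0), if_pos c1, if_pos c2];
        rw [if_neg (asymm c0), if_pos c1, if_neg (asymm c2)];
        rw [if_neg (asymm c0), if_neg (asymm c1), if_pos c2];
        rw [if_neg (asymm c0), if_neg (asymm c1), if_neg (asymm c2)]] <;>
      simp [List.Chain', List.isChain_cons_cons, hab, Ne.symm hab, c0, c1, c2,
        asymm c0, asymm c1, asymm c2]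

end Keys

lemma walk_edges_zip {V : Type*} {G : SimpleGraph V} {u v : V} (w : G.Walk u v) :
    w.edges = w.support.zipWith (fun a b => s(a, b)) w.support.tail := by
  induction w with
  | nil => rfl
  | @cons u u' v h p ih =>
    rw [Walk.edges_cons, Walk.support_cons, List.tail_cons, ih]
    conv_rhs => rw [p.support_eq_cons, List.zipWith_cons_cons, ← p.support_eq_cons]


lemma walk_edge_consec {V : Type*} {G : SimpleGraph V} {u v : V} (w : G.Walk u v)
    {e : Sym2 V} (he : e ∈ w.edges) :
    ∃ k, k + 1 ≤ w.length ∧ ∃ (h1 : k < w.support.length) (h2 : k + 1 < w.support.length),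
      e = s(w.support[k], w.support[k+1]) := by
  rw [walk_edges_zip] at he
  obtain ⟨k, hk, hke⟩ := List.mem_iff_getElem.mp he
  rw [List.length_zipWith, List.length_tail, w.length_support] at hk
  have hk' : k + 1 ≤ w.length := by omega
  refine ⟨k, hk', by rw [w.length_support]; omega, by rw [w.length_support]; omega, ?_⟩
  rw [← hke, List.getElem_zipWith, List.getElem_tail]


lemma walk_edge_consecD {V : Type*} {G : SimpleGraph V} {u v : V} (w : G.Walk u v)
    (x0 : V) {e : Sym2 V} (he : e ∈ w.edges) :
    ∃ k, k + 1 ≤ w.length ∧ e = s(w.support.getD k x0, w.support.getD (k+1) x0) := by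
  rw [walk_edges_zip] at he
  obtain ⟨k, hk, hke⟩ := List.mem_iff_getElem.mp he
  rw [List.length_zipWith, List.length_tail, w.length_support] at hk
  have h1 : k < w.support.length := by rw [w.length_support]; omega
  have h2 : k + 1 < w.support.length := by rw [w.length_support]; omega
  refine ⟨k, by rw [w.length_support] at h2; omega, ?_⟩
  rw [← hke, List.getElem_zipWith, List.getElem_tail,
      List.getD_eq_getElem w.support x0 h1, List.getD_eq_getElem w.support x0 h2]

set_option maxHeartbeats 2000000 in
/-- If all the constituent paths of a melon graph have odd length at least three,
then its permutation-representation number is at most 3. -/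
theorem melon_odd_prn_le_three {V : Type*} [Fintype V] [DecidableEq V]
    (G : SimpleGraph V) (m : ℕ) (x y : V) (P : Fin m → G.Walk x y)
    (hM : IsMelon G m x y P)
    (hodd : ∀ i, Odd (P i).length) (hlen : ∀ i, 3 ≤ (P i).length) :
    ∃ k ≤ 3, PermRepresentable G k := by
  classical
  refine ⟨3, le_refl 3, ?_⟩
  set n : Fin m → ℕ := fun i => (P i).length with hn
  set s : Fin m → List V := fun i => (P i).support with hsdef
  have hslen : ∀ i, (s i).length = n i + 1 := fun i => (P i).length_support
  have hnodup : ∀ i, (s i).Nodup := fun i => (hM.isPath i).support_nodup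
  have hn3 : ∀ i, 3 ≤ n i := hlen
  have hnodd : ∀ i, n i % 2 = 1 := fun i => Nat.odd_iff.mp (hodd i)
  set d : Fin m → ℕ → V := fun i k => (s i).getD k x with hddef
  have hdget : ∀ (i : Fin m) (k : ℕ) (h : k < (s i).length), d i k = (s i)[k] :=
    fun i k h => List.getD_eq_getElem _ _ h
  have hsP : ∀ i, (P i).support = s i := fun _ => rfl
  have hnP : ∀ i, (P i).length = n i := fun _ => rfl
  have hd0 : ∀ i, d i 0 = x := by
    intro i
    have h := (P i).support_eq_cons
    rw [hsP] at h
    rw [hddef]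
    simp only
    rw [h]
    rfl
  have hdn : ∀ i, d i (n i) = y := by
    intro i
    have hne : s i ≠ [] := by
      intro h
      have := hslen i
      rw [h] at this
      simp at this
    have h1 : (s i).getLast hne = y := (P i).getLast_support
    rw [List.getLast_eq_getElem] at h1
    have h2 : (s i).length - 1 = n i := by rw [hslen]; omega
    rw [hdget i (n i) (by rw [hslen]; omega)]
    simp only [h2] at h1
    exact h1
  have hchain : ∀ i, List.Chain' G.Adj (s i) := fun i => (P i).isChain_adj_support
  have hadj_of : ∀ (i : Fin m) (k : ℕ), k + 1 ≤ n i → G.Adj (d i k) (d i (k+1)) := by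
    intro i k hk
    rw [hdget i k (by rw [hslen]; omega), hdget i (k+1) (by rw [hslen]; omega)]
    have := List.isChain_iff_getElem.mp (hchain i) k (by rw [hslen]; omega)
    simpa using this
  have hmemd : ∀ (i : Fin m) (k : ℕ), k ≤ n i → d i k ∈ s i := by
    intro i k hk
    rw [hdget i k (by rw [hslen]; omega)]
    exact List.getElem_mem _
  have hidxOf : ∀ (i : Fin m) (v : V) (k : ℕ), k ≤ n i → d i k = v →
      (s i).idxOf v = k := by
    intro i v k hk hv
    have hkl : k < (s i).length := by rw [hslen]; omega
    have hmem : v ∈ s i := by rw [← hv]; exact hmemd i k hk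
    have hil : (s i).idxOf v < (s i).length := List.idxOf_lt_length_iff.mpr hmem
    have h1 : (s i)[(s i).idxOf v] = v := List.getElem_idxOf hil
    have h2 : (s i)[k] = v := by rw [← hdget i k hkl]; exact hv
    exact ((hnodup i).getElem_inj_iff).mp (h1.trans h2.symm)
  have hcover := hM.support_cover
  set idx : V → Fin m := fun v => (hcover v).choose with hidxdef
  have hmemi : ∀ v, v ∈ s (idx v) := fun v => (hcover v).choose_spec
  set pos : V → ℕ := fun v => (s (idx v)).idxOf v with hposdef
  have hposeq : ∀ v, pos v = (s (idx v)).idxOf v := fun _ => rfl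
  have hposlt : ∀ v, pos v ≤ n (idx v) := by
    intro v
    have h1 := List.idxOf_lt_length_iff.mpr (hmemi v)
    rw [hslen] at h1
    have h2 := hposeq v
    omega
  have hdpos : ∀ v, d (idx v) (pos v) = v := by
    intro v
    have hil : (s (idx v)).idxOf v < (s (idx v)).length :=
      List.idxOf_lt_length_iff.mpr (hmemi v)
    rw [hdget _ _ hil]
    exact List.getElem_idxOf hil
  have hxney : x ≠ y := hM.ne
  have hposx : ∀ i, (s i).idxOf x = 0 := fun i => hidxOf i x 0 (by omega) (hd0 i)
  have hposy : ∀ i, (s i).idxOf y = n i := fun i => hidxOf i y (n i) le_rfl (hdn i)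
  have hposxv : pos x = 0 := hposx _
  have hint : ∀ v, v ≠ x → v ≠ y → 1 ≤ pos v ∧ pos v ≤ n (idx v) - 1 := by
    intro v hvx hvy
    have h1 : pos v ≠ 0 := by
      intro h
      apply hvx
      rw [← hdpos v, h, hd0]
    have h2 : pos v ≠ n (idx v) := by
      intro h
      apply hvy
      rw [← hdpos v, h, hdn]
    have := hposlt v
    omega
  have huniq : ∀ (v : V) (i : Fin m), v ≠ x → v ≠ y → v ∈ s i → i = idx v := by
    intro v i hvx hvy hvi
    by_contra hne
    rcases hM.internallyDisjoint i (idx v) hne v hvi (hmemi v) with h | h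
    · exact hvx h
    · exact hvy h
  have hcoord : ∀ (i : Fin m) (k : ℕ), 1 ≤ k → k ≤ n i - 1 →
      idx (d i k) = i ∧ pos (d i k) = k ∧ d i k ≠ x ∧ d i k ≠ y := by
    intro i k h1 h2
    have hki : k ≤ n i := by omega
    have hvx : d i k ≠ x := by
      intro h
      have := hidxOf i x k hki h
      rw [hposx] at this
      omega
    have hvy : d i k ≠ y := by
      intro h
      have := hidxOf i y k hki h
      rw [hposy] at this
      have := hn3 i
      omega
    have hiq : i = idx (d i k) := huniq _ i hvx hvy (hmemd i k hki)
    refine ⟨hiq.symm, ?_, hvx, hvy⟩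
    rw [hposdef]
    simp only
    rw [← hiq]
    exact hidxOf i (d i k) k hki rfl
  -- positional adjacency characterization
  have hxy_nadj : ¬ G.Adj x y := by
    intro h
    obtain ⟨j, hj⟩ := hM.edge_cover s(x, y) h
    obtain ⟨k, hk, he⟩ := walk_edge_consecD (P j) x hj
    rw [hnP] at hk
    have hdk : (P j).support.getD k x = d j k := rfl
    have hdk1 : (P j).support.getD (k+1) x = d j (k+1) := rfl
    rw [hdk, hdk1] at he
    rcases Sym2.eq_iff.mp he with ⟨ha, hb⟩ | ⟨ha, hb⟩
    · have e1 := hidxOf j x k (by omega) ha.symm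
      have e2 := hidxOf j y (k+1) (by omega) hb.symm
      rw [hposx] at e1
      rw [hposy] at e2
      have := hn3 j
      omega
    · have e1 := hidxOf j x (k+1) (by omega) ha.symm
      have e2 := hidxOf j y k (by omega) hb.symm
      rw [hposx] at e1
      rw [hposy] at e2
      omega
  have hpos_adj : ∀ (i : Fin m) (p q : ℕ), p < q → q ≤ n i →
      (G.Adj (d i p) (d i q) ↔ q = p + 1) := by
    intro i p q hpq hq
    constructor
    · intro h
      obtain ⟨j, hj⟩ := hM.edge_cover s(d i p, d i q) h
      obtain ⟨k, hk, he⟩ := walk_edge_consecD (P j) x hj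
      rw [hnP] at hk
      have hdk : (P j).support.getD k x = d j k := rfl
      have hdk1 : (P j).support.getD (k+1) x = d j (k+1) := rfl
      rw [hdk, hdk1] at he
      by_cases hij : j = i
      · subst hij
        rcases Sym2.eq_iff.mp he with ⟨ha, hb⟩ | ⟨ha, hb⟩
        · have e1 := (hidxOf j (d j p) p (by omega) rfl).symm.trans
            (hidxOf j (d j p) k (by omega) ha.symm)
          have e2 := (hidxOf j (d j q) q (by omega) rfl).symm.trans
            (hidxOf j (d j q) (k+1) (by omega) hb.symm)
          omega
        · have e1 := (hidxOf j (d j p) p (by omega) rfl).symm.trans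
            (hidxOf j (d j p) (k+1) (by omega) ha.symm)
          have e2 := (hidxOf j (d j q) q (by omega) rfl).symm.trans
            (hidxOf j (d j q) k (by omega) hb.symm)
          omega
      · exfalso
        have hpm : d i p ∈ s j := by
          have := Walk.fst_mem_support_of_mem_edges (P j) hj
          rw [hsP] at this
          exact this
        have hqm : d i q ∈ s j := by
          have := Walk.snd_mem_support_of_mem_edges (P j) hj
          rw [hsP] at this
          exact this
        have hpi : d i p ∈ s i := hmemd i p (by omega)
        have hqi : d i q ∈ s i := hmemd i q hq
        rcases hM.internallyDisjoint j i hij (d i p) hpm hpi with hp | hp <;>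
          rcases hM.internallyDisjoint j i hij (d i q) hqm hqi with hq' | hq'
        · exact h.ne (hp.trans hq'.symm)
        · rw [hp, hq'] at h
          exact hxy_nadj h
        · rw [hp, hq'] at h
          exact hxy_nadj h.symm
        · exact h.ne (hp.trans hq'.symm)
    · intro h
      subst h
      exact hadj_of i p hq
  -- keys
  set mZ : ℤ := (m : ℤ) with hmZ
  set rk1 : ℕ → ℤ := fun p => (p : ℤ) - 1 + 2 * ((p % 2 : ℕ) : ℤ) with hrk1
  set rk3 : ℕ → ℕ → ℤ := fun N p => (N : ℤ) - (p : ℤ) - 2 + 2 * ((p % 2 : ℕ) : ℤ) with hrk3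
  set iZ : V → ℤ := fun v => ((idx v : ℕ) : ℤ) with hiZ
  set k0 : V → Lex (ℤ × ℤ) := fun v =>
    if v = x then toLex (0, 0) else if v = y then toLex (mZ + 2, 0)
    else toLex (iZ v + 1, rk1 (pos v)) with hk0
  set k1 : V → Lex (ℤ × ℤ) := fun v =>
    if v = x then toLex (0, 0) else if v = y then toLex (mZ + 2, 0)
    else toLex (mZ - iZ v, rk1 (pos v)) with hk1
  set k2 : V → Lex (ℤ × ℤ) := fun v =>
    if v = x then toLex (mZ + 3, 0) else if v = y then toLex (1, 0)
    else if pos v = n (idx v) - 1 then toLex (0, iZ v)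
    else if pos v = 1 then toLex (mZ + 4, iZ v)
    else toLex (2 + iZ v, rk3 (n (idx v)) (pos v)) with hk2
  have ek0x : k0 x = toLex (0, 0) := by simp [hk0]
  have ek0y : k0 y = toLex (mZ + 2, 0) := by simp [hk0, Ne.symm hxney]
  have ek0 : ∀ v, v ≠ x → v ≠ y → k0 v = toLex (iZ v + 1, rk1 (pos v)) := by
    intro v h1 h2; simp [hk0, h1, h2]
  have ek1x : k1 x = toLex (0, 0) := by simp [hk1]
  have ek1y : k1 y = toLex (mZ + 2, 0) := by simp [hk1, Ne.symm hxney]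
  have ek1 : ∀ v, v ≠ x → v ≠ y → k1 v = toLex (mZ - iZ v, rk1 (pos v)) := by
    intro v h1 h2; simp [hk1, h1, h2]
  have ek2x : k2 x = toLex (mZ + 3, 0) := by simp [hk2]
  have ek2y : k2 y = toLex (1, 0) := by simp [hk2, Ne.symm hxney]
  have ek2t : ∀ v, v ≠ x → v ≠ y → pos v = n (idx v) - 1 →
      k2 v = toLex (0, iZ v) := by
    intro v h1 h2 h3; simp [hk2, h1, h2, h3]
  have ek2o : ∀ v, v ≠ x → v ≠ y → pos v = 1 →
      k2 v = toLex (mZ + 4, iZ v) := by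
    intro v h1 h2 h3
    have hg := hn3 (idx v)
    have hne1 : ¬((1:ℕ) = n (idx v) - 1) := by omega
    simp [hk2, h1, h2, h3, hne1]
  have ek2m : ∀ v, v ≠ x → v ≠ y → pos v ≠ 1 → pos v ≠ n (idx v) - 1 →
      k2 v = toLex (2 + iZ v, rk3 (n (idx v)) (pos v)) := by
    intro v h1 h2 h3 h4
    simp [hk2, h1, h2, h3, h4]
  have hiZeq : ∀ u v : V, idx u = idx v → iZ u = iZ v := by
    intro u v h; rw [hiZ]; simp [h]
  -- consecutive key comparison
  have hconsec : ∀ (i : Fin m) (k : ℕ), k + 1 ≤ n i →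
      ((k % 2 = 0 → (k0 (d i k) < k0 (d i (k+1)) ∧ k1 (d i k) < k1 (d i (k+1)) ∧
          k2 (d i k) < k2 (d i (k+1)))) ∧
       (k % 2 = 1 → (k0 (d i (k+1)) < k0 (d i k) ∧ k1 (d i (k+1)) < k1 (d i k) ∧
          k2 (d i (k+1)) < k2 (d i k)))) := by
    intro i k hk
    have hn3i := hn3 i
    have hnoddi := hnodd i
    have hilt := i.isLt
    rcases Nat.eq_zero_or_pos k with rfl | hkpos
    · refine ⟨fun _ => ?_, fun h => by simp at h⟩
      obtain ⟨hi1, hp1, hx1, hy1⟩ := hcoord i 1 le_rfl (by omega)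
      rw [hd0]
      refine ⟨?_, ?_, ?_⟩
      · rw [ek0x, ek0 _ hx1 hy1, hiZ]
        simp only [Prod.Lex.lt_iff, ofLex_toLex, lt_self_iff_false, false_or, true_and, eq_self_iff_true, hrk1, hi1]
        omega
      · rw [ek1x, ek1 _ hx1 hy1, hiZ]
        simp only [Prod.Lex.lt_iff, ofLex_toLex, lt_self_iff_false, false_or, true_and, eq_self_iff_true, hrk1, hi1]
        omega
      · rw [ek2x, ek2o _ hx1 hy1 hp1, hiZ]
        simp only [Prod.Lex.lt_iff, ofLex_toLex, lt_self_iff_false, false_or, true_and, eq_self_iff_true, hi1]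
        omega
    · by_cases hkn : k + 1 = n i
      · have hyv : d i (k+1) = y := by rw [hkn, hdn]
        obtain ⟨hia, hpa, hxa, hya⟩ := hcoord i k (by omega) (by omega)
        refine ⟨fun _ => ?_, fun hko => absurd hko (by omega)⟩
        rw [hyv]
        refine ⟨?_, ?_, ?_⟩
        · rw [ek0 _ hxa hya, ek0y, hiZ]
          simp only [Prod.Lex.lt_iff, ofLex_toLex, lt_self_iff_false, false_or, true_and, eq_self_iff_true, hrk1, hia]
          omega
        · rw [ek1 _ hxa hya, ek1y, hiZ]
          simp only [Prod.Lex.lt_iff, ofLex_toLex, lt_self_iff_false, false_or, true_and, eq_self_iff_true, hrk1, hia]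
          omega
        · rw [ek2t _ hxa hya (by rw [hpa, hia]; omega), ek2y, hiZ]
          simp only [Prod.Lex.lt_iff, ofLex_toLex, lt_self_iff_false, false_or, true_and, eq_self_iff_true, hia]
          omega
      · obtain ⟨hia, hpa, hxa, hya⟩ := hcoord i k (by omega) (by omega)
        obtain ⟨hib, hpb, hxb, hyb⟩ := hcoord i (k+1) (by omega) (by omega)
        constructor
        · intro hke
          refine ⟨?_, ?_, ?_⟩
          · rw [ek0 _ hxa hya, ek0 _ hxb hyb, hiZ]
            simp only [Prod.Lex.lt_iff, ofLex_toLex, lt_self_iff_false, false_or, true_and, eq_self_iff_true, hrk1, hia, hib, hpa, hpb]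
            omega
          · rw [ek1 _ hxa hya, ek1 _ hxb hyb, hiZ]
            simp only [Prod.Lex.lt_iff, ofLex_toLex, lt_self_iff_false, false_or, true_and, eq_self_iff_true, hrk1, hia, hib, hpa, hpb]
            omega
          · rw [ek2m _ hxa hya (by rw [hpa]; omega) (by rw [hpa, hia]; omega),
              ek2m _ hxb hyb (by rw [hpb]; omega) (by rw [hpb, hib]; omega), hiZ]
            simp only [Prod.Lex.lt_iff, ofLex_toLex, lt_self_iff_false, false_or, true_and, eq_self_iff_true, hrk3, hia, hib, hpa, hpb]
            omega
        · intro hko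
          refine ⟨?_, ?_, ?_⟩
          · rw [ek0 _ hxa hya, ek0 _ hxb hyb, hiZ]
            simp only [Prod.Lex.lt_iff, ofLex_toLex, lt_self_iff_false, false_or, true_and, eq_self_iff_true, hrk1, hia, hib, hpa, hpb]
            omega
          · rw [ek1 _ hxa hya, ek1 _ hxb hyb, hiZ]
            simp only [Prod.Lex.lt_iff, ofLex_toLex, lt_self_iff_false, false_or, true_and, eq_self_iff_true, hrk1, hia, hib, hpa, hpb]
            omega
          · by_cases hk1' : k = 1 <;> by_cases hkt : k + 1 = n i - 1
            · rw [ek2o _ hxa hya (by rw [hpa]; omega),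
                ek2t _ hxb hyb (by rw [hpb, hib]; omega), hiZ]
              simp only [Prod.Lex.lt_iff, ofLex_toLex, lt_self_iff_false, false_or, true_and, eq_self_iff_true, hia, hib]
              omega
            · rw [ek2o _ hxa hya (by rw [hpa]; omega),
                ek2m _ hxb hyb (by rw [hpb]; omega) (by rw [hpb, hib]; omega), hiZ]
              simp only [Prod.Lex.lt_iff, ofLex_toLex, lt_self_iff_false, false_or, true_and, eq_self_iff_true, hrk3, hia, hib, hpa, hpb]
              omega
            · rw [ek2m _ hxa hya (by rw [hpa]; omega) (by rw [hpa, hia]; omega),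
                ek2t _ hxb hyb (by rw [hpb, hib]; omega), hiZ]
              simp only [Prod.Lex.lt_iff, ofLex_toLex, lt_self_iff_false, false_or, true_and, eq_self_iff_true, hrk3, hia, hib, hpa, hpb]
              omega
            · rw [ek2m _ hxa hya (by rw [hpa]; omega) (by rw [hpa, hia]; omega),
                ek2m _ hxb hyb (by rw [hpb]; omega) (by rw [hpb, hib]; omega), hiZ]
              simp only [Prod.Lex.lt_iff, ofLex_toLex, lt_self_iff_false, false_or, true_and, eq_self_iff_true, hrk3, hia, hib, hpa, hpb]
              omega
  have classify : ∀ v : V, v = x ∨ v = y ∨ (v ≠ x ∧ v ≠ y) := by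
    intro v
    by_cases h1 : v = x
    · exact Or.inl h1
    · by_cases h2 : v = y
      · exact Or.inr (Or.inl h2)
      · exact Or.inr (Or.inr ⟨h1, h2⟩)
  have hback : ∀ u v : V, u ≠ x → u ≠ y → v ≠ x → v ≠ y →
      idx u = idx v → pos u = pos v → u = v := by
    intro u v _ _ _ _ hi hp
    rw [← hdpos u, ← hdpos v, hi, hp]
  have inj0 : Function.Injective k0 := by
    intro u v h
    rcases classify u with rfl | rfl | ⟨hux, huy⟩ <;>
      rcases classify v with rfl | rfl | ⟨hvx, hvy⟩
    · rfl
    · rw [ek0x, ek0y] at h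
      simp only [toLex_inj, Prod.mk.injEq] at h
      omega
    · rw [ek0x, ek0 v hvx hvy] at h
      simp only [toLex_inj, Prod.mk.injEq, hiZ, hrk1] at h
      omega
    · rw [ek0y, ek0x] at h
      simp only [toLex_inj, Prod.mk.injEq] at h
      omega
    · rfl
    · rw [ek0y, ek0 v hvx hvy] at h
      have := (idx v).isLt
      simp only [toLex_inj, Prod.mk.injEq, hiZ, hrk1] at h
      omega
    · rw [ek0 u hux huy, ek0x] at h
      simp only [toLex_inj, Prod.mk.injEq, hiZ, hrk1] at h
      omega
    · rw [ek0 u hux huy, ek0y] at h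
      have := (idx u).isLt
      simp only [toLex_inj, Prod.mk.injEq, hiZ, hrk1] at h
      omega
    · rw [ek0 u hux huy, ek0 v hvx hvy] at h
      simp only [toLex_inj, Prod.mk.injEq, hiZ, hrk1] at h
      exact hback u v hux huy hvx hvy (Fin.ext (by omega)) (by omega)
  have inj1 : Function.Injective k1 := by
    intro u v h
    rcases classify u with rfl | rfl | ⟨hux, huy⟩ <;>
      rcases classify v with rfl | rfl | ⟨hvx, hvy⟩
    · rfl
    · rw [ek1x, ek1y] at h
      simp only [toLex_inj, Prod.mk.injEq] at h
      omega
    · rw [ek1x, ek1 v hvx hvy] at h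
      have := (idx v).isLt
      simp only [toLex_inj, Prod.mk.injEq, hiZ, hrk1] at h
      omega
    · rw [ek1y, ek1x] at h
      simp only [toLex_inj, Prod.mk.injEq] at h
      omega
    · rfl
    · rw [ek1y, ek1 v hvx hvy] at h
      have := (idx v).isLt
      simp only [toLex_inj, Prod.mk.injEq, hiZ, hrk1] at h
      omega
    · rw [ek1 u hux huy, ek1x] at h
      have := (idx u).isLt
      simp only [toLex_inj, Prod.mk.injEq, hiZ, hrk1] at h
      omega
    · rw [ek1 u hux huy, ek1y] at h
      have := (idx u).isLt
      simp only [toLex_inj, Prod.mk.injEq, hiZ, hrk1] at h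
      omega
    · rw [ek1 u hux huy, ek1 v hvx hvy] at h
      simp only [toLex_inj, Prod.mk.injEq, hiZ, hrk1] at h
      exact hback u v hux huy hvx hvy (Fin.ext (by omega)) (by omega)
  have k2cases : ∀ v : V, v ≠ x → v ≠ y →
      (pos v = n (idx v) - 1 ∧ k2 v = toLex (0, iZ v)) ∨
      (pos v = 1 ∧ pos v ≠ n (idx v) - 1 ∧ k2 v = toLex (mZ + 4, iZ v)) ∨
      (pos v ≠ 1 ∧ pos v ≠ n (idx v) - 1 ∧
        k2 v = toLex (2 + iZ v, rk3 (n (idx v)) (pos v))) := by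
    intro v h1 h2
    by_cases h3 : pos v = n (idx v) - 1
    · exact Or.inl ⟨h3, ek2t v h1 h2 h3⟩
    · by_cases h4 : pos v = 1
      · exact Or.inr (Or.inl ⟨h4, h3, ek2o v h1 h2 h4⟩)
      · exact Or.inr (Or.inr ⟨h4, h3, ek2m v h1 h2 h4 h3⟩)
  have inj2 : Function.Injective k2 := by
    intro u v h
    rcases classify u with rfl | rfl | ⟨hux, huy⟩ <;>
      rcases classify v with rfl | rfl | ⟨hvx, hvy⟩
    · rfl
    · rw [ek2x, ek2y] at h
      simp only [toLex_inj, Prod.mk.injEq] at h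
      omega
    · have := (idx v).isLt
      rcases k2cases v hvx hvy with ⟨_, hv⟩ | ⟨_, _, hv⟩ | ⟨_, _, hv⟩ <;>
        rw [ek2x, hv] at h <;>
        simp only [toLex_inj, Prod.mk.injEq, hiZ, hrk3] at h <;> omega
    · rw [ek2y, ek2x] at h
      simp only [toLex_inj, Prod.mk.injEq] at h
      omega
    · rfl
    · have := (idx v).isLt
      rcases k2cases v hvx hvy with ⟨_, hv⟩ | ⟨_, _, hv⟩ | ⟨_, _, hv⟩ <;>
        rw [ek2y, hv] at h <;>
        simp only [toLex_inj, Prod.mk.injEq, hiZ, hrk3] at h <;> omega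
    · have := (idx u).isLt
      rcases k2cases u hux huy with ⟨_, hu⟩ | ⟨_, _, hu⟩ | ⟨_, _, hu⟩ <;>
        rw [hu, ek2x] at h <;>
        simp only [toLex_inj, Prod.mk.injEq, hiZ, hrk3] at h <;> omega
    · have := (idx u).isLt
      rcases k2cases u hux huy with ⟨_, hu⟩ | ⟨_, _, hu⟩ | ⟨_, _, hu⟩ <;>
        rw [hu, ek2y] at h <;>
        simp only [toLex_inj, Prod.mk.injEq, hiZ, hrk3] at h <;> omega
    · have hu' := (idx u).isLt
      have hv' := (idx v).isLt
      rcases k2cases u hux huy with ⟨hut, hu⟩ | ⟨hu1, hut, hu⟩ | ⟨hu1, hut, hu⟩ <;>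
        rcases k2cases v hvx hvy with ⟨hvt, hv⟩ | ⟨hv1, hvt, hv⟩ | ⟨hv1, hvt, hv⟩ <;>
        rw [hu, hv] at h <;>
        simp only [toLex_inj, Prod.mk.injEq, hiZ, hrk3] at h
      · have hie : idx u = idx v := Fin.ext (by omega)
        exact hback u v hux huy hvx hvy hie (by rw [hut, hvt, hie])
      · omega
      · omega
      · omega
      · have hie : idx u = idx v := Fin.ext (by omega)
        exact hback u v hux huy hvx hvy hie (by rw [hu1, hv1])
      · omega
      · omega
      · omega
      · have hie : idx u = idx v := Fin.ext (by omega)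
        rw [hie] at h
        exact hback u v hux huy hvx hvy hie (by omega)
  have hfalse : ∀ a b : V, a ≠ b → ¬ G.Adj a b →
      k0 a < k0 b → k1 a < k1 b → k2 a < k2 b → False := by
    intro a b hab hna h0 h1c h2c
    rcases classify a with rfl | rfl | ⟨hax, hay⟩
    · rcases classify b with rfl | rfl | ⟨hbx, hby⟩
      · exact hab rfl
      · rw [ek2x, ek2y] at h2c
        simp only [Prod.Lex.lt_iff, ofLex_toLex] at h2c
        omega
      · have hb := hint b hbx hby
        have hb1 : pos b ≠ 1 := by
          intro hpb
          apply hna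
          have h := hadj_of (idx b) 0 (by omega)
          rw [hd0] at h
          rw [show (0:ℕ) + 1 = 1 from rfl, ← hpb, hdpos] at h
          exact h
        have := (idx b).isLt
        rcases k2cases b hbx hby with ⟨_, hv⟩ | ⟨hc1, _, hv⟩ | ⟨_, _, hv⟩ <;>
          rw [ek2x, hv] at h2c <;>
          simp only [Prod.Lex.lt_iff, ofLex_toLex, hiZ, hrk3] at h2c <;>
          first
            | omega
            | exact hb1 hc1
    · rcases classify b with rfl | rfl | ⟨hbx, hby⟩
      · rw [ek0y, ek0x] at h0
        simp only [Prod.Lex.lt_iff, ofLex_toLex] at h0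
        omega
      · exact hab rfl
      · rw [ek0y, ek0 b hbx hby] at h0
        have := (idx b).isLt
        simp only [Prod.Lex.lt_iff, ofLex_toLex, hiZ, hrk1] at h0
        omega
    · rcases classify b with rfl | rfl | ⟨hbx, hby⟩
      · rw [ek0 a hax hay, ek0x] at h0
        simp only [Prod.Lex.lt_iff, ofLex_toLex, hiZ, hrk1] at h0
        omega
      · have ha := hint a hax hay
        have hn3a := hn3 (idx a)
        have hat : pos a ≠ n (idx a) - 1 := by
          intro hpa
          apply hna
          have h := hadj_of (idx a) (n (idx a) - 1) (by omega)
          have h2 : n (idx a) - 1 + 1 = n (idx a) := by omega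
          rw [h2, hdn] at h
          rw [← hpa, hdpos] at h
          exact h
        have := (idx a).isLt
        rcases k2cases a hax hay with ⟨hc1, hv⟩ | ⟨_, _, hv⟩ | ⟨_, _, hv⟩ <;>
          rw [hv, ek2y] at h2c <;>
          simp only [Prod.Lex.lt_iff, ofLex_toLex, hiZ, hrk3] at h2c <;>
          first
            | exact hat hc1
            | omega
      · have ha := hint a hax hay
        have hb := hint b hbx hby
        by_cases hij : idx a = idx b
        · have hna2 : n (idx a) = n (idx b) := by rw [hij]
          have hno := hnodd (idx b)
          have hn3b := hn3 (idx b)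
          have hpq : pos a ≠ pos b := by
            intro h
            exact hab (hback a b hax hay hbx hby hij h)
          have hnc1 : pos b ≠ pos a + 1 := by
            intro hc
            apply hna
            have h := hadj_of (idx a) (pos a) (by rw [hij]; omega)
            rw [hdpos] at h
            rw [← hc, hij, hdpos] at h
            exact h
          have hnc2 : pos a ≠ pos b + 1 := by
            intro hc
            have h := hadj_of (idx b) (pos b) (by omega)
            rw [hdpos] at h
            rw [← hc, ← hij, hdpos] at h
            exact hna h.symm
          rw [ek0 a hax hay, ek0 b hbx hby] at h0
          simp only [Prod.Lex.lt_iff, ofLex_toLex, hiZ, hrk1, hij] at h0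
          rcases k2cases a hax hay with ⟨hat, hu⟩ | ⟨ha1, hat, hu⟩ | ⟨ha1, hat, hu⟩ <;>
            rcases k2cases b hbx hby with ⟨hbt, hv⟩ | ⟨hb1, hbt, hv⟩ | ⟨hb1, hbt, hv⟩ <;>
            rw [hu, hv] at h2c <;>
            simp only [Prod.Lex.lt_iff, ofLex_toLex, hiZ, hrk3, hij] at h2c <;>
            omega
        · rw [ek0 a hax hay, ek0 b hbx hby] at h0
          rw [ek1 a hax hay, ek1 b hbx hby] at h1c
          have hne : (idx a : ℕ) ≠ (idx b : ℕ) := Fin.val_ne_of_ne hij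
          simp only [Prod.Lex.lt_iff, ofLex_toLex, hiZ, hrk1] at h0 h1c
          omega
  apply perm3 G k0 k1 k2 inj0 inj1 inj2
  intro a b hab
  constructor
  · intro hAdj
    obtain ⟨j, hj⟩ := hM.edge_cover s(a, b) ((SimpleGraph.mem_edgeSet G).mpr hAdj)
    obtain ⟨k, hk, he⟩ := walk_edge_consecD (P j) x hj
    rw [hnP] at hk
    have he' : s(a, b) = s(d j k, d j (k+1)) := he
    have hpar := Nat.mod_two_eq_zero_or_one k
    rcases Sym2.eq_iff.mp he' with ⟨ha', hb'⟩ | ⟨ha', hb'⟩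
    · rcases hpar with hp | hp
      · left
        rw [ha', hb']
        exact (hconsec j k hk).1 hp
      · right
        rw [ha', hb']
        exact (hconsec j k hk).2 hp
    · rcases hpar with hp | hp
      · right
        rw [ha', hb']
        exact (hconsec j k hk).1 hp
      · left
        rw [ha', hb']
        exact (hconsec j k hk).2 hp
  · intro h
    by_contra hna
    rcases h with ⟨c0, c1, c2⟩ | ⟨c0, c1, c2⟩
    · exact hfalse a b hab hna c0 c1 c2
    · exact hfalse b a (Ne.symm hab) (fun h' => hna h'.symm) c0 c1 c2
end

section
/- If all the constituent paths of a melon graph M have even length, then the permutation-representation number of M is at most 3. -/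
open SimpleGraph

variable {V : Type*}

section MelonAux

section Lists
variable [DecidableEq V]

lemma filter_pair_zero {l : List V} {a b : V}
    (ha : l.count a = 0) (hb : l.count b = 0) :
    l.filter (fun x => decide (x = a ∨ x = b)) = [] := by
  induction l with
  | nil => rfl
  | cons h t ih =>
      have hha : h ≠ a := by rintro rfl; simp [List.count_cons_self] at ha
      have hhb : h ≠ b := by rintro rfl; simp [List.count_cons_self] at hb
      rw [List.count_cons_of_ne hha] at ha
      rw [List.count_cons_of_ne hhb] at hb
      rw [List.filter_cons_of_neg (by simp [hha, hhb])]
      exact ih ha hb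

lemma filter_pair_one_left {l : List V} {a b : V} (hab : a ≠ b)
    (ha : l.count a = 1) (hb : l.count b = 0) :
    l.filter (fun x => decide (x = a ∨ x = b)) = [a] := by
  induction l with
  | nil => simp at ha
  | cons h t ih =>
      have hhb : h ≠ b := by rintro rfl; simp [List.count_cons_self] at hb
      rw [List.count_cons_of_ne hhb] at hb
      by_cases hha : h = a
      · subst hha
        rw [List.count_cons_self] at ha
        rw [List.filter_cons_of_pos (by simp)]
        rw [filter_pair_zero (by omega) hb]
      · rw [List.count_cons_of_ne hha] at ha
        rw [List.filter_cons_of_neg (by simp [hha, hhb])]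
        exact ih ha hb

lemma filter_pair_one_right {l : List V} {a b : V} (hab : a ≠ b)
    (ha : l.count a = 0) (hb : l.count b = 1) :
    l.filter (fun x => decide (x = a ∨ x = b)) = [b] := by
  induction l with
  | nil => simp at hb
  | cons h t ih =>
      have hha : h ≠ a := by rintro rfl; simp [List.count_cons_self] at ha
      rw [List.count_cons_of_ne hha] at ha
      by_cases hhb : h = b
      · subst hhb
        rw [List.count_cons_self] at hb
        rw [List.filter_cons_of_pos (by simp)]
        rw [filter_pair_zero ha (by omega)]
      · rw [List.count_cons_of_ne hhb] at hb
        rw [List.filter_cons_of_neg (by simp [hha, hhb])]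
        exact ih ha hb

lemma filter_pair_one_one {l : List V} {a b : V} (hab : a ≠ b)
    (ha : l.count a = 1) (hb : l.count b = 1) :
    l.filter (fun x => decide (x = a ∨ x = b)) = [a, b] ∨
    l.filter (fun x => decide (x = a ∨ x = b)) = [b, a] := by
  induction l with
  | nil => simp at ha
  | cons h t ih =>
      by_cases hha : h = a
      · subst hha
        have hhb : h ≠ b := hab
        rw [List.count_cons_self] at ha
        rw [List.count_cons_of_ne hhb] at hb
        left
        rw [List.filter_cons_of_pos (by simp)]
        rw [filter_pair_one_right hab (by omega) hb]
      · by_cases hhb : h = b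
        · subst hhb
          rw [List.count_cons_self] at hb
          rw [List.count_cons_of_ne hha] at ha
          right
          rw [List.filter_cons_of_pos (by simp)]
          rw [filter_pair_one_left hab ha (by omega)]
        · rw [List.count_cons_of_ne hha] at ha
          rw [List.count_cons_of_ne hhb] at hb
          rw [List.filter_cons_of_neg (by simp [hha, hhb])]
          exact ih ha hb


lemma sorted_filter_pair {g : V → ℤ} {l : List V} {a b : V}
    (hs : l.Pairwise (fun u v => g u ≤ g v)) (hab : a ≠ b)
    (ha : l.count a = 1) (hb : l.count b = 1) (hlt : g a < g b) :
    l.filter (fun x => decide (x = a ∨ x = b)) = [a, b] := by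
  rcases filter_pair_one_one hab ha hb with h | h
  · exact h
  · exfalso
    have := hs.filter (fun x => decide (x = a ∨ x = b))
    rw [h] at this
    rcases List.pairwise_cons.1 this with ⟨h2, -⟩
    have := h2 a (by simp)
    omega


variable [Fintype V]

lemma perm_three_of_keys (G : SimpleGraph V) (g1 g2 g3 : V → ℤ)
    (i1 : Function.Injective g1) (i2 : Function.Injective g2)
    (i3 : Function.Injective g3)
    (hiff : ∀ a b : V, a ≠ b →
      (G.Adj a b ↔ (g1 a < g1 b ∧ g2 a < g2 b ∧ g3 a < g3 b) ∨
                   (g1 b < g1 a ∧ g2 b < g2 a ∧ g3 b < g3 a))) :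
    PermRepresentable G 3 := by
  classical
  set base := (Finset.univ : Finset V).toList with hbase
  let p : (V → ℤ) → List V := fun g => base.mergeSort (fun u v => decide (g u ≤ g v))
  have hperm : ∀ g, List.Perm (p g) base := fun g => List.mergeSort_perm base _
  have hcount : ∀ g (v : V), (p g).count v = 1 := by
    intro g v
    rw [(hperm g).count_eq]
    exact List.count_eq_one_of_mem (Finset.nodup_toList _) (by simp [hbase])
  have hsorted : ∀ g, (p g).Pairwise (fun u v => g u ≤ g v) := by
    intro g
    have := List.pairwise_mergeSort (le := fun u v => decide (g u ≤ g v))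
      (fun a b c hab hbc => by
        simp only [decide_eq_true_eq] at *; omega)
      (fun a b => by
        simp only [Bool.or_eq_true, decide_eq_true_eq]; omega) base
    exact this.imp (fun h => by simpa using h)
  refine ⟨![p g1, p g2, p g3], ?_, ?_, ?_⟩
  · intro i v
    fin_cases i <;> simp [hcount]
  · intro v
    have : v ∈ p g1 := (hperm g1).mem_iff.2 (by simp [hbase])
    simp only [List.ofFn_succ, Matrix.cons_val_zero, Matrix.cons_val_one, Matrix.head_cons,
      List.ofFn_zero, List.flatten, Matrix.cons_val_succ]
    simp [this]
  · intro a b hab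
    have hne : ∀ (g : V → ℤ), Function.Injective g → g a ≠ g b :=
      fun g hg h => hab (hg h)
    have hflt : ∀ (g : V → ℤ), Function.Injective g → ¬ g a < g b → g b < g a := by
      intro g hg h
      rcases lt_or_gt_of_ne (hne g hg) with h' | h'
      · exact absurd h' h
      · exact h'
    have hw : (List.ofFn ![p g1, p g2, p g3]).flatten = p g1 ++ (p g2 ++ (p g3 ++ [])) := by
      simp [List.ofFn_succ]
    rw [Alternates, hw]
    rw [List.filter_append, List.filter_append, List.filter_append]
    have hfe : List.filter (fun x => decide (x = a ∨ x = b)) ([] : List V) = [] := rfl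
    rw [hfe]
    have key : ∀ (g : V → ℤ), g a < g b →
        List.filter (fun x => decide (x = a ∨ x = b)) (p g) = [a, b] :=
      fun g h => sorted_filter_pair (hsorted g) hab (hcount g a) (hcount g b) h
    have key' : ∀ (g : V → ℤ), g b < g a →
        List.filter (fun x => decide (x = a ∨ x = b)) (p g) = [b, a] := by
      intro g h
      have := sorted_filter_pair (hsorted g) hab.symm (hcount g b) (hcount g a) h
      convert this using 2
      funext x
      simp only [decide_eq_decide]
      tauto
    rw [hiff a b hab]
    by_cases c1 : g1 a < g1 b <;> by_cases c2 : g2 a < g2 b <;> by_cases c3 : g3 a < g3 b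
    · rw [key g1 c1, key g2 c2, key g3 c3]
      exact iff_of_true (Or.inl ⟨c1, c2, c3⟩) (by simp [List.Chain', List.isChain_cons_cons, hab, hab.symm])
    · rw [key g1 c1, key g2 c2, key' g3 (hflt g3 i3 c3)]
      refine iff_of_false ?_ ?_
      · rintro (⟨-, -, h⟩ | ⟨h, -, -⟩) <;> omega
      · intro h; simp [List.Chain', List.isChain_cons_cons] at h
    · rw [key g1 c1, key' g2 (hflt g2 i2 c2), key g3 c3]
      refine iff_of_false ?_ ?_
      · rintro (⟨-, h, -⟩ | ⟨h, -, -⟩) <;> omega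
      · intro h; simp [List.Chain', List.isChain_cons_cons] at h
    · rw [key g1 c1, key' g2 (hflt g2 i2 c2), key' g3 (hflt g3 i3 c3)]
      refine iff_of_false ?_ ?_
      · rintro (⟨-, h, -⟩ | ⟨h, -, -⟩) <;> omega
      · intro h; simp [List.Chain', List.isChain_cons_cons] at h
    · rw [key' g1 (hflt g1 i1 c1), key g2 c2, key g3 c3]
      refine iff_of_false ?_ ?_
      · rintro (⟨h, -, -⟩ | ⟨-, h, -⟩) <;> omega
      · intro h; simp [List.Chain', List.isChain_cons_cons] at h
    · rw [key' g1 (hflt g1 i1 c1), key g2 c2, key' g3 (hflt g3 i3 c3)]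
      refine iff_of_false ?_ ?_
      · rintro (⟨h, -, -⟩ | ⟨-, h, -⟩) <;> omega
      · intro h; simp [List.Chain', List.isChain_cons_cons] at h
    · rw [key' g1 (hflt g1 i1 c1), key' g2 (hflt g2 i2 c2), key g3 c3]
      refine iff_of_false ?_ ?_
      · rintro (⟨h, -, -⟩ | ⟨-, -, h⟩) <;> omega
      · intro h; simp [List.Chain', List.isChain_cons_cons] at h
    · rw [key' g1 (hflt g1 i1 c1), key' g2 (hflt g2 i2 c2), key' g3 (hflt g3 i3 c3)]
      exact iff_of_true
        (Or.inr ⟨hflt g1 i1 c1, hflt g2 i2 c2, hflt g3 i3 c3⟩)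
        (by simp [List.Chain', List.isChain_cons_cons, hab, hab.symm])

end Lists

section Walks
variable {G : SimpleGraph V}

lemma walk_getVert_inj {u v : V} {p : G.Walk u v} (hp : p.IsPath) :
    ∀ t, t ≤ p.length → ∀ s, s ≤ p.length → p.getVert t = p.getVert s → t = s := by
  induction p with
  | nil => intro t ht s hs _; simp at ht hs; omega
  | @cons u w v h q ih =>
      intro t ht s hs heq
      rcases (Walk.cons_isPath_iff h q).1 hp with ⟨hq, hu⟩
      match t, s with
      | 0, 0 => rfl
      | 0, s + 1 =>
          exfalso
          apply hu
          rw [Walk.mem_support_iff_exists_getVert]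
          refine ⟨s, ?_, ?_⟩
          · simpa using heq.symm
          · simpa using hs
      | t + 1, 0 =>
          exfalso
          apply hu
          rw [Walk.mem_support_iff_exists_getVert]
          refine ⟨t, ?_, ?_⟩
          · simpa using heq
          · simpa using ht
      | t + 1, s + 1 =>
          have := ih hq t (by simpa using ht) s (by simpa using hs) (by simpa using heq)
          omega

lemma walk_mem_edges {u v : V} {p : G.Walk u v} {e : Sym2 V} (he : e ∈ p.edges) :
    ∃ k, k < p.length ∧ e = s(p.getVert k, p.getVert (k + 1)) := by
  induction p with
  | nil => simp [Walk.edges] at he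
  | @cons u w v h q ih =>
      rw [Walk.edges_cons, List.mem_cons] at he
      rcases he with he | he
      · exact ⟨0, by simp, by simpa using he⟩
      · obtain ⟨k, hk, hke⟩ := ih he
        exact ⟨k + 1, by simp; omega, by simpa using hke⟩

lemma walk_getVert_mem_support {u v : V} (p : G.Walk u v) {t : ℕ} (ht : t ≤ p.length) :
    p.getVert t ∈ p.support :=
  Walk.mem_support_iff_exists_getVert.2 ⟨t, rfl, ht⟩

end Walks

def melA1 (t : ℕ) : ℤ := (t : ℤ) + 2 * ((t % 2 : ℕ) : ℤ)

def melAB (t : ℕ) : ℤ := if t % 2 = 0 then -(t : ℤ) else 2 - (t : ℤ)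

def melVal (K : ℤ) (c : ℕ) (d : ℤ) : ℤ := (c : ℤ) * (3 * K) + d

lemma melVal_lt_block {K : ℤ} {c c' : ℕ} {d d' : ℤ} (hc : c < c')
    (h1 : -K < d) (h2 : d < K) (h3 : -K < d') (h4 : d' < K) :
    melVal K c d < melVal K c' d' := by
  have hK : 0 < K := by linarith
  have hcc : (c : ℤ) + 1 ≤ (c' : ℤ) := by exact_mod_cast hc
  have h3K : 0 ≤ 3 * K := by linarith
  have := mul_le_mul_of_nonneg_right hcc h3K
  simp only [melVal]
  nlinarith

lemma melVal_lt_inner {K : ℤ} {c : ℕ} {d d' : ℤ} (h : d < d') :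
    melVal K c d < melVal K c d' := by
  simp only [melVal]; omega


end MelonAux

/-- If all the constituent paths of a melon graph have even length, then its
permutation-representation number is at most 3. -/
theorem melon_even_prn_le_three {V : Type*} [Fintype V] [DecidableEq V]
    (G : SimpleGraph V) (m : ℕ) (x y : V) (P : Fin m → G.Walk x y)
    (hM : IsMelon G m x y P) (heven : ∀ i, Even (P i).length) :
    ∃ k ≤ 3, PermRepresentable G k := by
  classical
  refine ⟨3, le_refl 3, ?_⟩
  have hm1 := hM.one_le_m
  set K : ℤ := (m : ℤ) + (Fintype.card V : ℤ) + 10 with hK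
  have hn1 : ∀ i, 1 ≤ (P i).length := hM.one_le_length
  have hnE : ∀ i, (P i).length % 2 = 0 := fun i => Nat.even_iff.1 (heven i)
  have hn2 : ∀ i, 2 ≤ (P i).length := fun i => by have := hn1 i; have := hnE i; omega
  have hnC : ∀ i, (P i).length + 1 ≤ Fintype.card V := by
    intro i
    have h1 : (P i).support.Nodup := (hM.isPath i).support_nodup
    have h2 := h1.length_le_card
    rw [SimpleGraph.Walk.length_support] at h2
    exact h2
  have hgv0 : ∀ i : Fin m, (P i).getVert 0 = x := fun i => SimpleGraph.Walk.getVert_zero _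
  have hgvn : ∀ (i : Fin m) t, (P i).length ≤ t → (P i).getVert t = y :=
    fun i t ht => SimpleGraph.Walk.getVert_of_length_le _ ht
  have hinj : ∀ (i : Fin m) (t s : ℕ), t ≤ (P i).length → s ≤ (P i).length →
      (P i).getVert t = (P i).getVert s → t = s :=
    fun i t s ht hs h => walk_getVert_inj (hM.isPath i) t ht s hs h
  have hne_x : ∀ (i : Fin m) t, 1 ≤ t → t ≤ (P i).length - 1 → (P i).getVert t ≠ x := by
    intro i t h1 h2 hx
    have h3 := hn2 i
    have := hinj i t 0 (by omega) (by omega) (by rw [hgv0 i]; exact hx)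
    omega
  have hne_y : ∀ (i : Fin m) t, 1 ≤ t → t ≤ (P i).length - 1 → (P i).getVert t ≠ y := by
    intro i t h1 h2 hy
    have h3 := hn2 i
    have := hinj i t ((P i).length) (by omega) (by omega)
      (by rw [hgvn i ((P i).length) le_rfl]; exact hy)
    omega
  have hdisj : ∀ (i j : Fin m), i ≠ j → ∀ t s, 1 ≤ t → t ≤ (P i).length - 1 →
      1 ≤ s → s ≤ (P j).length - 1 → (P i).getVert t ≠ (P j).getVert s := by
    intro i j hij t s h1 h2 h3 h4 heq
    have hm1' : (P i).getVert t ∈ (P i).support :=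
      walk_getVert_mem_support _ (by have := hn2 i; omega)
    have hm2' : (P i).getVert t ∈ (P j).support := by
      rw [heq]; exact walk_getVert_mem_support _ (by have := hn2 j; omega)
    rcases hM.internallyDisjoint i j hij _ hm1' hm2' with h | h
    · exact hne_x i t h1 h2 h
    · exact hne_y i t h1 h2 h
  have hAdjI : ∀ (i : Fin m) t, t < (P i).length →
      G.Adj ((P i).getVert t) ((P i).getVert (t + 1)) :=
    fun i t ht => SimpleGraph.Walk.adj_getVert_succ _ ht
  have hcoord : ∀ v : V, ∃ (i : Fin m) (t : ℕ), v ≠ x → v ≠ y →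
      (1 ≤ t ∧ t ≤ (P i).length - 1 ∧ (P i).getVert t = v) := by
    intro v
    by_cases hvx : v = x
    · exact ⟨⟨0, hm1⟩, 0, fun h _ => absurd hvx h⟩
    by_cases hvy : v = y
    · exact ⟨⟨0, hm1⟩, 0, fun _ h => absurd hvy h⟩
    obtain ⟨i, hi⟩ := hM.support_cover v
    rw [SimpleGraph.Walk.mem_support_iff_exists_getVert] at hi
    obtain ⟨t, hgv, ht⟩ := hi
    have h1 : 1 ≤ t := by
      rcases Nat.eq_zero_or_pos t with rfl | h
      · rw [hgv0 i] at hgv; exact absurd hgv.symm hvx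
      · exact h
    have h2 : t ≤ (P i).length - 1 := by
      have : t ≠ (P i).length := by
        intro h; rw [h, hgvn i ((P i).length) le_rfl] at hgv; exact hvy hgv.symm
      omega
    exact ⟨i, t, fun _ _ => ⟨h1, h2, hgv⟩⟩
  choose I T hIT using hcoord
  have hcu : ∀ (i : Fin m) t, 1 ≤ t → t ≤ (P i).length - 1 →
      I ((P i).getVert t) = i ∧ T ((P i).getVert t) = t := by
    intro i t h1 h2
    have hx' := hne_x i t h1 h2
    have hy' := hne_y i t h1 h2
    obtain ⟨ha, hb, hc⟩ := hIT ((P i).getVert t) hx' hy'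
    by_cases hii : I ((P i).getVert t) = i
    · refine ⟨hii, ?_⟩
      rw [hii] at hc hb
      have := hn2 i
      exact hinj i _ t (by omega) (by omega) hc
    · exact absurd hc (hdisj _ i hii _ t ha hb h1 h2)
  set F1 : V → ℤ := fun v => if v = x then melVal K 0 0 else if v = y then melVal K 1 0
      else if (P (I v)).length = 2 then melVal K 2 (I v)
      else melVal K (3 + (I v : ℕ)) (melA1 (T v)) with hF1def
  set F2 : V → ℤ := fun v => if v = x then melVal K 0 0 else if v = y then melVal K (m + 1) 0
      else if T v = (P (I v)).length - 1 then melVal K (m + 2) ((m : ℤ) - (I v : ℕ))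
      else melVal K (m - (I v : ℕ)) (melAB (T v)) with hF2def
  set F3 : V → ℤ := fun v => if v = x then melVal K (m + 2) 0 else if v = y then melVal K 0 0
      else if T v = 1 then melVal K (m + 3) ((m : ℤ) - (I v : ℕ))
      else melVal K (m - (I v : ℕ) + 1) (melAB (T v)) with hF3def
  have hF1x : F1 x = melVal K 0 0 := by rw [hF1def]; simp
  have hF1y : F1 y = melVal K 1 0 := by rw [hF1def]; simp [hM.ne.symm]
  have hF2x : F2 x = melVal K 0 0 := by rw [hF2def]; simp
  have hF2y : F2 y = melVal K (m + 1) 0 := by rw [hF2def]; simp [hM.ne.symm]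
  have hF3x : F3 x = melVal K (m + 2) 0 := by rw [hF3def]; simp
  have hF3y : F3 y = melVal K 0 0 := by rw [hF3def]; simp [hM.ne.symm]
  have hF1s : ∀ v, v ≠ x → v ≠ y → (P (I v)).length = 2 → F1 v = melVal K 2 (I v) := by
    intro v h1 h2 h3; rw [hF1def]; simp [h1, h2, h3]
  have hF1l : ∀ v, v ≠ x → v ≠ y → (P (I v)).length ≠ 2 →
      F1 v = melVal K (3 + (I v : ℕ)) (melA1 (T v)) := by
    intro v h1 h2 h3; rw [hF1def]; simp [h1, h2, h3]
  have hF2last : ∀ v, v ≠ x → v ≠ y → T v = (P (I v)).length - 1 →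
      F2 v = melVal K (m + 2) ((m : ℤ) - (I v : ℕ)) := by
    intro v h1 h2 h3; rw [hF2def]; simp [h1, h2, h3]
  have hF2mid : ∀ v, v ≠ x → v ≠ y → T v ≠ (P (I v)).length - 1 →
      F2 v = melVal K (m - (I v : ℕ)) (melAB (T v)) := by
    intro v h1 h2 h3; rw [hF2def]; simp [h1, h2, h3]
  have hF3first : ∀ v, v ≠ x → v ≠ y → T v = 1 →
      F3 v = melVal K (m + 3) ((m : ℤ) - (I v : ℕ)) := by
    intro v h1 h2 h3; rw [hF3def]; simp [h1, h2, h3]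
  have hF3mid : ∀ v, v ≠ x → v ≠ y → T v ≠ 1 →
      F3 v = melVal K (m - (I v : ℕ) + 1) (melAB (T v)) := by
    intro v h1 h2 h3; rw [hF3def]; simp [h1, h2, h3]
  -- getVert-based eval lemmas
  have hG1 : ∀ (i : Fin m) t, 1 ≤ t → t ≤ (P i).length - 1 →
      (((P i).length = 2 → F1 ((P i).getVert t) = melVal K 2 i) ∧
       ((P i).length ≠ 2 → F1 ((P i).getVert t) = melVal K (3 + (i : ℕ)) (melA1 t))) := by
    intro i t h1 h2
    obtain ⟨hci, hct⟩ := hcu i t h1 h2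
    have hx' := hne_x i t h1 h2
    have hy' := hne_y i t h1 h2
    constructor
    · intro h; rw [hF1s _ hx' hy' (by rw [hci]; exact h), hci]
    · intro h; rw [hF1l _ hx' hy' (by rw [hci]; exact h), hci, hct]
  have hG2 : ∀ (i : Fin m) t, 1 ≤ t → t ≤ (P i).length - 1 →
      ((t = (P i).length - 1 → F2 ((P i).getVert t) = melVal K (m + 2) ((m : ℤ) - (i : ℕ))) ∧
       (t ≠ (P i).length - 1 → F2 ((P i).getVert t) = melVal K (m - (i : ℕ)) (melAB t))) := by
    intro i t h1 h2
    obtain ⟨hci, hct⟩ := hcu i t h1 h2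
    have hx' := hne_x i t h1 h2
    have hy' := hne_y i t h1 h2
    constructor
    · intro h; rw [hF2last _ hx' hy' (by rw [hci, hct]; exact h), hci]
    · intro h; rw [hF2mid _ hx' hy' (by rw [hci, hct]; exact h), hci, hct]
  have hG3 : ∀ (i : Fin m) t, 1 ≤ t → t ≤ (P i).length - 1 →
      ((t = 1 → F3 ((P i).getVert t) = melVal K (m + 3) ((m : ℤ) - (i : ℕ))) ∧
       (t ≠ 1 → F3 ((P i).getVert t) = melVal K (m - (i : ℕ) + 1) (melAB t))) := by
    intro i t h1 h2
    obtain ⟨hci, hct⟩ := hcu i t h1 h2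
    have hx' := hne_x i t h1 h2
    have hy' := hne_y i t h1 h2
    constructor
    · intro h; rw [hF3first _ hx' hy' (by rw [hct]; exact h), hci]
    · intro h; rw [hF3mid _ hx' hy' (by rw [hct]; exact h), hci, hct]
  -- bounds helpers
  have hbA1 : ∀ (i : Fin m) t, t ≤ (P i).length - 1 → -K < melA1 t ∧ melA1 t < K := by
    intro i t ht
    have := hnC i; have := hn2 i
    simp only [melA1]; constructor <;> omega
  have hbAB : ∀ (i : Fin m) t, t ≤ (P i).length - 1 → -K < melAB t ∧ melAB t < K := by
    intro i t ht
    have := hnC i; have := hn2 i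
    simp only [melAB]; split_ifs <;> constructor <;> omega
  have hbI : ∀ i : Fin m, -K < ((i : ℕ) : ℤ) ∧ ((i : ℕ) : ℤ) < K := by
    intro i
    have h : ((i : ℕ) : ℤ) < (m : ℤ) := by exact_mod_cast i.isLt
    constructor <;> omega
  have hbMI : ∀ i : Fin m, -K < (m : ℤ) - ((i : ℕ) : ℤ) ∧ (m : ℤ) - ((i : ℕ) : ℤ) < K := by
    intro i
    have h : ((i : ℕ) : ℤ) < (m : ℤ) := by exact_mod_cast i.isLt
    constructor <;> omega
  have hb0 : -K < (0 : ℤ) ∧ (0 : ℤ) < K := by constructor <;> omega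
  -- main step lemma for adjacent pairs along a path
  have hstep : ∀ (i : Fin m) t, t < (P i).length →
      ((t % 2 = 0 → (F1 ((P i).getVert t) < F1 ((P i).getVert (t + 1)) ∧
                     F2 ((P i).getVert t) < F2 ((P i).getVert (t + 1)) ∧
                     F3 ((P i).getVert t) < F3 ((P i).getVert (t + 1)))) ∧
       (t % 2 = 1 → (F1 ((P i).getVert (t + 1)) < F1 ((P i).getVert t) ∧
                     F2 ((P i).getVert (t + 1)) < F2 ((P i).getVert t) ∧
                     F3 ((P i).getVert (t + 1)) < F3 ((P i).getVert t)))) := by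
    intro i t ht
    have h2' := hn2 i
    have hE := hnE i
    have hnc := hnC i
    have him := i.isLt
    rcases Nat.eq_zero_or_pos t with rfl | ht1
    · constructor
      · intro _
        have e1 : (1 : ℕ) ≤ 1 := le_rfl
        have e2 : 1 ≤ (P i).length - 1 := by omega
        rw [hgv0 i]
        refine ⟨?_, ?_, ?_⟩
        · rw [hF1x]
          by_cases hs : (P i).length = 2
          · rw [(hG1 i 1 e1 e2).1 hs]
            exact melVal_lt_block (by omega) hb0.1 hb0.2 (hbI i).1 (hbI i).2
          · rw [(hG1 i 1 e1 e2).2 hs]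
            exact melVal_lt_block (by omega) hb0.1 hb0.2 (hbA1 i 1 e2).1 (hbA1 i 1 e2).2
        · rw [hF2x]
          by_cases hs : 1 = (P i).length - 1
          · rw [(hG2 i 1 e1 e2).1 hs]
            exact melVal_lt_block (by omega) hb0.1 hb0.2 (hbMI i).1 (hbMI i).2
          · rw [(hG2 i 1 e1 e2).2 hs]
            exact melVal_lt_block (by omega) hb0.1 hb0.2 (hbAB i 1 e2).1 (hbAB i 1 e2).2
        · rw [hF3x, (hG3 i 1 e1 e2).1 rfl]
          exact melVal_lt_block (by omega) hb0.1 hb0.2 (hbMI i).1 (hbMI i).2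
      · intro h; exact absurd h (by omega)
    · rcases Nat.lt_or_ge (t + 1) ((P i).length) with hlt | hge
      · have e1a : 1 ≤ t := ht1
        have e2a : t ≤ (P i).length - 1 := by omega
        have e1b : 1 ≤ t + 1 := by omega
        have e2b : t + 1 ≤ (P i).length - 1 := by omega
        have h4 : 4 ≤ (P i).length := by omega
        have hs2 : (P i).length ≠ 2 := by omega
        constructor
        · intro hpar
          refine ⟨?_, ?_, ?_⟩
          · rw [(hG1 i t e1a e2a).2 hs2, (hG1 i (t + 1) e1b e2b).2 hs2]
            apply melVal_lt_inner; simp only [melA1]; omega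
          · rw [(hG2 i t e1a e2a).2 (by omega)]
            by_cases hb : t + 1 = (P i).length - 1
            · rw [(hG2 i (t + 1) e1b e2b).1 hb]
              exact melVal_lt_block (by omega) (hbAB i t e2a).1 (hbAB i t e2a).2
                (hbMI i).1 (hbMI i).2
            · rw [(hG2 i (t + 1) e1b e2b).2 hb]
              apply melVal_lt_inner; simp only [melAB]; split_ifs <;> omega
          · rw [(hG3 i t e1a e2a).2 (by omega), (hG3 i (t + 1) e1b e2b).2 (by omega)]
            apply melVal_lt_inner; simp only [melAB]; split_ifs <;> omega
        · intro hpar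
          refine ⟨?_, ?_, ?_⟩
          · rw [(hG1 i t e1a e2a).2 hs2, (hG1 i (t + 1) e1b e2b).2 hs2]
            apply melVal_lt_inner; simp only [melA1]; omega
          · rw [(hG2 i t e1a e2a).2 (by omega), (hG2 i (t + 1) e1b e2b).2 (by omega)]
            apply melVal_lt_inner; simp only [melAB]; split_ifs <;> omega
          · rw [(hG3 i (t + 1) e1b e2b).2 (by omega)]
            by_cases hb : t = 1
            · rw [(hG3 i t e1a e2a).1 hb]
              exact melVal_lt_block (by omega) (hbAB i (t + 1) e2b).1 (hbAB i (t + 1) e2b).2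
                (hbMI i).1 (hbMI i).2
            · rw [(hG3 i t e1a e2a).2 hb]
              apply melVal_lt_inner; simp only [melAB]; split_ifs <;> omega
      · have hteq : t = (P i).length - 1 := by omega
        have htodd : t % 2 = 1 := by omega
        constructor
        · intro h; exact absurd h (by omega)
        · intro _
          have e1a : 1 ≤ t := ht1
          have e2a : t ≤ (P i).length - 1 := by omega
          rw [hgvn i (t + 1) (by omega)]
          refine ⟨?_, ?_, ?_⟩
          · rw [hF1y]
            by_cases hs : (P i).length = 2
            · rw [(hG1 i t e1a e2a).1 hs]
              exact melVal_lt_block (by omega) hb0.1 hb0.2 (hbI i).1 (hbI i).2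
            · rw [(hG1 i t e1a e2a).2 hs]
              exact melVal_lt_block (by omega) hb0.1 hb0.2 (hbA1 i t e2a).1 (hbA1 i t e2a).2
          · rw [hF2y, (hG2 i t e1a e2a).1 hteq]
            exact melVal_lt_block (by omega) hb0.1 hb0.2 (hbMI i).1 (hbMI i).2
          · rw [hF3y]
            by_cases hb : t = 1
            · rw [(hG3 i t e1a e2a).1 hb]
              exact melVal_lt_block (by omega) hb0.1 hb0.2 (hbMI i).1 (hbMI i).2
            · rw [(hG3 i t e1a e2a).2 hb]
              exact melVal_lt_block (by omega) hb0.1 hb0.2 (hbAB i t e2a).1 (hbAB i t e2a).2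
  -- single-direction witness for non-adjacent pairs
  have hNon : ∀ a b : V, a ≠ b → ¬ G.Adj a b →
      (F1 a < F1 b ∨ F2 a < F2 b ∨ F3 a < F3 b) := by
    intro a b hab hnadj
    by_cases hax : a = x
    · by_cases hby : b = y
      · exact Or.inl (by
          rw [hax, hby, hF1x, hF1y]
          exact melVal_lt_block (by omega) hb0.1 hb0.2 hb0.1 hb0.2)
      · have hbx : b ≠ x := fun h => hab (hax.trans h.symm)
        obtain ⟨hb1, hb2, hb3⟩ := hIT b hbx hby
        left
        rw [hax, hF1x]
        by_cases hs : (P (I b)).length = 2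
        · rw [hF1s b hbx hby hs]
          exact melVal_lt_block (by omega) hb0.1 hb0.2 (hbI (I b)).1 (hbI (I b)).2
        · rw [hF1l b hbx hby hs]
          exact melVal_lt_block (by omega) hb0.1 hb0.2 (hbA1 (I b) (T b) hb2).1
            (hbA1 (I b) (T b) hb2).2
    · by_cases hay : a = y
      · by_cases hbx : b = x
        · exact Or.inr (Or.inr (by
            rw [hay, hbx, hF3x, hF3y]
            exact melVal_lt_block (by omega) hb0.1 hb0.2 hb0.1 hb0.2))
        · have hby : b ≠ y := fun h => hab (hay.trans h.symm)
          obtain ⟨hb1, hb2, hb3⟩ := hIT b hbx hby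
          left
          rw [hay, hF1y]
          by_cases hs : (P (I b)).length = 2
          · rw [hF1s b hbx hby hs]
            exact melVal_lt_block (by omega) hb0.1 hb0.2 (hbI (I b)).1 (hbI (I b)).2
          · rw [hF1l b hbx hby hs]
            exact melVal_lt_block (by omega) hb0.1 hb0.2 (hbA1 (I b) (T b) hb2).1
              (hbA1 (I b) (T b) hb2).2
      · obtain ⟨ha1, ha2, ha3⟩ := hIT a hax hay
        have hiA := (I a).isLt
        have hnEa := hnE (I a)
        have hnca := hnC (I a)
        have h2a := hn2 (I a)
        by_cases hbx : b = x
        · have hTa : T a ≠ 1 := by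
            intro h
            apply hnadj
            have h01 := hAdjI (I a) 0 (by omega)
            rw [hgv0 (I a), Nat.zero_add] at h01
            rw [← h, ha3] at h01
            rw [hbx]
            exact h01.symm
          right; right
          rw [hbx, hF3x, hF3mid a hax hay hTa]
          exact melVal_lt_block (by omega) (hbAB (I a) (T a) ha2).1
            (hbAB (I a) (T a) ha2).2 hb0.1 hb0.2
        · by_cases hby : b = y
          · have hTa : T a ≠ (P (I a)).length - 1 := by
              intro h
              apply hnadj
              have h01 := hAdjI (I a) ((P (I a)).length - 1) (by omega)
              have heq2 : (P (I a)).length - 1 + 1 = (P (I a)).length := by omega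
              rw [heq2, hgvn (I a) _ le_rfl] at h01
              rw [← h, ha3] at h01
              rw [hby]
              exact h01
            right; left
            rw [hby, hF2y, hF2mid a hax hay hTa]
            exact melVal_lt_block (by omega) (hbAB (I a) (T a) ha2).1
              (hbAB (I a) (T a) ha2).2 hb0.1 hb0.2
          · obtain ⟨hb1, hb2, hb3⟩ := hIT b hbx hby
            have hiB := (I b).isLt
            have hnEb := hnE (I b)
            have hncb := hnC (I b)
            have h2b := hn2 (I b)
            by_cases hij : I a = I b
            · -- same path
              have hlen : (P (I a)).length = (P (I b)).length := by rw [hij]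
              have hTne : T a ≠ T b := by
                intro h; apply hab; rw [← ha3, ← hb3, hij, h]
              have hgap1 : T b ≠ T a + 1 := by
                intro h
                apply hnadj
                have h01 := hAdjI (I a) (T a) (by omega)
                rw [ha3] at h01
                have hb3' := hb3
                rw [← hij] at hb3'
                rw [h] at hb3'
                rw [hb3'] at h01
                exact h01
              have hgap2 : T a ≠ T b + 1 := by
                intro h
                apply hnadj
                have h01 := hAdjI (I b) (T b) (by omega)
                rw [hb3] at h01
                have ha3' := ha3
                rw [hij] at ha3'
                rw [h] at ha3'
                rw [ha3'] at h01
                exact h01.symm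
              have h4 : 4 ≤ (P (I a)).length := by omega
              rcases Nat.lt_or_ge (T a) (T b) with hcase | hcase
              · have hgap : T a + 2 ≤ T b := by omega
                left
                rw [hF1l a hax hay (by omega), hF1l b hbx hby (by rw [← hij]; omega), ← hij]
                apply melVal_lt_inner; simp only [melA1]; omega
              · have hgap : T b + 2 ≤ T a := by omega
                by_cases hTaL : T a = (P (I a)).length - 1
                · right; right
                  by_cases hTb1 : T b = 1
                  · rw [hF3mid a hax hay (by omega), hF3first b hbx hby hTb1, ← hij]
                    exact melVal_lt_block (by omega) (hbAB (I a) (T a) ha2).1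
                      (hbAB (I a) (T a) ha2).2 (hbMI (I a)).1 (hbMI (I a)).2
                  · rw [hF3mid a hax hay (by omega), hF3mid b hbx hby hTb1, ← hij]
                    apply melVal_lt_inner; simp only [melAB]; split_ifs <;> omega
                · right; left
                  rw [hF2mid a hax hay hTaL, hF2mid b hbx hby (by omega), ← hij]
                  apply melVal_lt_inner; simp only [melAB]; split_ifs <;> omega
            · -- different paths
              have hne' : ((I a) : ℕ) ≠ ((I b) : ℕ) := fun h => hij (Fin.ext h)
              by_cases hTaL : T a = (P (I a)).length - 1
              · by_cases hTbL : T b = (P (I b)).length - 1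
                · -- both last-class
                  by_cases hsa : (P (I a)).length = 2
                  · by_cases hsb : (P (I b)).length = 2
                    · rcases Nat.lt_or_ge ((I a) : ℕ) ((I b) : ℕ) with hc | hc
                      · left
                        rw [hF1s a hax hay hsa, hF1s b hbx hby hsb]
                        apply melVal_lt_inner
                        exact_mod_cast hc
                      · have hc' : ((I b) : ℕ) < ((I a) : ℕ) := by omega
                        right; left
                        rw [hF2last a hax hay hTaL, hF2last b hbx hby hTbL]
                        apply melVal_lt_inner
                        have h1' : (((I b) : ℕ) : ℤ) < (((I a) : ℕ) : ℤ) := by exact_mod_cast hc'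
                        omega
                    · left
                      rw [hF1s a hax hay hsa, hF1l b hbx hby hsb]
                      exact melVal_lt_block (by omega) (hbI (I a)).1 (hbI (I a)).2
                        (hbA1 (I b) (T b) hb2).1 (hbA1 (I b) (T b) hb2).2
                  · by_cases hsb : (P (I b)).length = 2
                    · right; right
                      have hTa2 : T a ≠ 1 := by omega
                      have hTb1 : T b = 1 := by omega
                      rw [hF3mid a hax hay hTa2, hF3first b hbx hby hTb1]
                      exact melVal_lt_block (by omega) (hbAB (I a) (T a) ha2).1
                        (hbAB (I a) (T a) ha2).2 (hbMI (I b)).1 (hbMI (I b)).2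
                    · rcases Nat.lt_or_ge ((I a) : ℕ) ((I b) : ℕ) with hc | hc
                      · left
                        rw [hF1l a hax hay hsa, hF1l b hbx hby hsb]
                        exact melVal_lt_block (by omega) (hbA1 (I a) (T a) ha2).1
                          (hbA1 (I a) (T a) ha2).2 (hbA1 (I b) (T b) hb2).1
                          (hbA1 (I b) (T b) hb2).2
                      · right; left
                        rw [hF2last a hax hay hTaL, hF2last b hbx hby hTbL]
                        apply melVal_lt_inner
                        have h1' : (((I b) : ℕ) : ℤ) < (((I a) : ℕ) : ℤ) := by
                          exact_mod_cast (by omega : ((I b) : ℕ) < ((I a) : ℕ))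
                        omega
                · -- a last-class, b middle-class
                  by_cases hsa : (P (I a)).length = 2
                  · left
                    have hsb4 : 4 ≤ (P (I b)).length := by omega
                    rw [hF1s a hax hay hsa, hF1l b hbx hby (by omega)]
                    exact melVal_lt_block (by omega) (hbI (I a)).1 (hbI (I a)).2
                      (hbA1 (I b) (T b) hb2).1 (hbA1 (I b) (T b) hb2).2
                  · have hTa2 : T a ≠ 1 := by omega
                    by_cases hTb1 : T b = 1
                    · right; right
                      rw [hF3mid a hax hay hTa2, hF3first b hbx hby hTb1]
                      exact melVal_lt_block (by omega) (hbAB (I a) (T a) ha2).1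
                        (hbAB (I a) (T a) ha2).2 (hbMI (I b)).1 (hbMI (I b)).2
                    · rcases Nat.lt_or_ge ((I a) : ℕ) ((I b) : ℕ) with hc | hc
                      · left
                        have hsb4 : 4 ≤ (P (I b)).length := by omega
                        rw [hF1l a hax hay hsa, hF1l b hbx hby (by omega)]
                        exact melVal_lt_block (by omega) (hbA1 (I a) (T a) ha2).1
                          (hbA1 (I a) (T a) ha2).2 (hbA1 (I b) (T b) hb2).1
                          (hbA1 (I b) (T b) hb2).2
                      · right; right
                        rw [hF3mid a hax hay hTa2, hF3mid b hbx hby hTb1]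
                        exact melVal_lt_block (by omega) (hbAB (I a) (T a) ha2).1
                          (hbAB (I a) (T a) ha2).2 (hbAB (I b) (T b) hb2).1
                          (hbAB (I b) (T b) hb2).2
              · by_cases hTbL : T b = (P (I b)).length - 1
                · -- a middle-class, b last-class : F2 always works
                  right; left
                  rw [hF2mid a hax hay hTaL, hF2last b hbx hby hTbL]
                  exact melVal_lt_block (by omega) (hbAB (I a) (T a) ha2).1
                    (hbAB (I a) (T a) ha2).2 (hbMI (I b)).1 (hbMI (I b)).2
                · -- both middle-class
                  have hsa4 : 4 ≤ (P (I a)).length := by omega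
                  have hsb4 : 4 ≤ (P (I b)).length := by omega
                  rcases Nat.lt_or_ge ((I a) : ℕ) ((I b) : ℕ) with hc | hc
                  · left
                    rw [hF1l a hax hay (by omega), hF1l b hbx hby (by omega)]
                    exact melVal_lt_block (by omega) (hbA1 (I a) (T a) ha2).1
                      (hbA1 (I a) (T a) ha2).2 (hbA1 (I b) (T b) hb2).1
                      (hbA1 (I b) (T b) hb2).2
                  · right; left
                    rw [hF2mid a hax hay hTaL, hF2mid b hbx hby hTbL]
                    exact melVal_lt_block (by omega) (hbAB (I a) (T a) ha2).1
                      (hbAB (I a) (T a) ha2).2 (hbAB (I b) (T b) hb2).1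
                      (hbAB (I b) (T b) hb2).2
  -- adjacent pairs are consistently ordered
  have hAdjKeys : ∀ a b : V, G.Adj a b →
      ((F1 a < F1 b ∧ F2 a < F2 b ∧ F3 a < F3 b) ∨
       (F1 b < F1 a ∧ F2 b < F2 a ∧ F3 b < F3 a)) := by
    intro a b hadj
    obtain ⟨i, hi⟩ := hM.edge_cover s(a, b) (G.mem_edgeSet.2 hadj)
    obtain ⟨k, hk, hke⟩ := walk_mem_edges hi
    have hstep' := hstep i k hk
    rcases Sym2.eq_iff.1 hke with ⟨h1, h2⟩ | ⟨h1, h2⟩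
    · subst h1; subst h2
      rcases (by omega : k % 2 = 0 ∨ k % 2 = 1) with h | h
      · exact Or.inl (hstep'.1 h)
      · exact Or.inr (hstep'.2 h)
    · subst h1; subst h2
      rcases (by omega : k % 2 = 0 ∨ k % 2 = 1) with h | h
      · exact Or.inr (hstep'.1 h)
      · exact Or.inl (hstep'.2 h)
  -- tie-breaking index
  set idx : V → ℤ := fun v => ((Finset.univ : Finset V).toList.idxOf v : ℤ) with hidxdef
  have hidx0 : ∀ v, 0 ≤ idx v := by intro v; simp only [hidxdef]; positivity
  have hidxlt : ∀ v, idx v < (Fintype.card V : ℤ) := by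
    intro v
    have h1 : (Finset.univ : Finset V).toList.idxOf v <
        (Finset.univ : Finset V).toList.length :=
      List.idxOf_lt_length_iff.2 (by simp)
    rw [Finset.length_toList, Finset.card_univ] at h1
    simp only [hidxdef]
    exact_mod_cast h1
  have hidxinj : ∀ u v : V, idx u = idx v → u = v := by
    intro u v h
    simp only [hidxdef] at h
    have h' : (Finset.univ : Finset V).toList.idxOf u =
        (Finset.univ : Finset V).toList.idxOf v := by exact_mod_cast h
    exact (List.idxOf_inj (by simp)).1 h'
  have hNpos : (0 : ℤ) < (Fintype.card V : ℤ) := by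
    have : 0 < Fintype.card V := Fintype.card_pos_iff.2 ⟨x⟩
    exact_mod_cast this
  set Gk : (V → ℤ) → V → ℤ := fun F v => F v * (Fintype.card V : ℤ) + idx v with hGkdef
  have hmono : ∀ (F : V → ℤ) (u v : V), F u < F v → Gk F u < Gk F v := by
    intro F u v h
    have h1 : F u + 1 ≤ F v := by omega
    have h2 := mul_le_mul_of_nonneg_right h1 (le_of_lt hNpos)
    have h3 : (F u + 1) * (Fintype.card V : ℤ) =
        F u * (Fintype.card V : ℤ) + (Fintype.card V : ℤ) := by ring
    have h4 := hidx0 u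
    have h5 := hidxlt u
    have h6 := hidx0 v
    rw [hGkdef]
    simp only
    linarith
  have hGinj : ∀ F : V → ℤ, Function.Injective (Gk F) := by
    intro F u v h
    rcases lt_trichotomy (F u) (F v) with hc | hc | hc
    · exact absurd h (ne_of_lt (hmono F u v hc))
    · apply hidxinj
      rw [hGkdef] at h
      simp only at h
      rw [hc] at h
      linarith
    · exact absurd h.symm (ne_of_lt (hmono F v u hc))
  apply perm_three_of_keys G (Gk F1) (Gk F2) (Gk F3) (hGinj F1) (hGinj F2) (hGinj F3)
  intro a b hab
  constructor
  · intro hadj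
    rcases hAdjKeys a b hadj with ⟨u1, u2, u3⟩ | ⟨u1, u2, u3⟩
    · exact Or.inl ⟨hmono _ _ _ u1, hmono _ _ _ u2, hmono _ _ _ u3⟩
    · exact Or.inr ⟨hmono _ _ _ u1, hmono _ _ _ u2, hmono _ _ _ u3⟩
  · intro h
    by_contra hnadj
    have hd1 := hNon a b hab hnadj
    have hd2 := hNon b a hab.symm (fun h' => hnadj h'.symm)
    rcases h with ⟨u1, u2, u3⟩ | ⟨u1, u2, u3⟩
    · rcases hd2 with hcon | hcon | hcon
      · exact lt_asymm u1 (hmono _ _ _ hcon)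
      · exact lt_asymm u2 (hmono _ _ _ hcon)
      · exact lt_asymm u3 (hmono _ _ _ hcon)
    · rcases hd1 with hcon | hcon | hcon
      · exact lt_asymm u1 (hmono _ _ _ hcon)
      · exact lt_asymm u2 (hmono _ _ _ hcon)
      · exact lt_asymm u3 (hmono _ _ _ hcon)
end

section
/- Let M be a melon graph in which the endpoints 0 and 0′ are not adjacent (no constituent path has length one). Then the line graph L(M) is 3-word-representable. -/
open SimpleGraph

variable {V : Type*}

section MelonAuxiliary

open List

namespace MelonAux
variable {α : Type*}

variable {α : Type*}

/-- `l₁ <+ l₂ → l₁.flatMap g <+ l₂.flatMap g`. -/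
theorem Sublist.flatMap' {β : Type*} {l₁ l₂ : List α} (g : α → List β) (h : l₁.Sublist l₂) :
    (l₁.flatMap g).Sublist (l₂.flatMap g) := by
  induction h with
  | slnil => simp
  | cons a h ih =>
    simp only [List.flatMap_cons]
    exact ih.trans (List.sublist_append_right _ _)
  | cons_cons a h ih =>
    simp only [List.flatMap_cons]
    exact List.Sublist.append_left ih _

theorem pair_sublist_of_pairwise {r : α → α → Prop} {l : List α} (hl : l.Pairwise r)
    {a b : α} (ha : a ∈ l) (hb : b ∈ l) (hab : r a b) (hne : a ≠ b)
    (hasymm : ¬ r b a) : [a, b].Sublist l := by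
  induction l with
  | nil => simp at ha
  | cons x xs ih =>
    rcases List.pairwise_cons.1 hl with ⟨hx, hxs⟩
    by_cases hxa : x = a
    · subst hxa
      have hbxs : b ∈ xs := by
        rcases List.mem_cons.1 hb with h | h
        · exact absurd h.symm hne
        · exact h
      exact (List.singleton_sublist.2 hbxs).cons₂ _
    · have hax : a ∈ xs := by
        rcases List.mem_cons.1 ha with h | h
        · exact absurd h.symm hxa
        · exact h
      by_cases hxb : x = b
      · subst hxb
        exact absurd (hx a hax) hasymm
      · have hbx : b ∈ xs := by
          rcases List.mem_cons.1 hb with h | h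
          · exact absurd h.symm hxb
          · exact h
        exact (ih hxs hax hbx).cons _

theorem pair_sublist_finRange {m : ℕ} {i i' : Fin m} (h : i < i') :
    [i, i'].Sublist (List.finRange m) :=
  pair_sublist_of_pairwise (List.pairwise_lt_finRange m) (List.mem_finRange i)
    (List.mem_finRange i') h (Fin.ne_of_lt h) (by exact fun h' => absurd h (not_lt.2 h'.le))

/-- Master lemma: a sublist consisting of exactly the `p`-elements is the filter. -/
theorem filter_eq_of_sublist {p : α → Bool} {l S : List α} (hS : S.Sublist l)
    (hSp : ∀ x ∈ S, p x = true) (hlen : l.countP p ≤ S.length) :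
    l.filter p = S := by
  have h1 : (S.filter p).Sublist (l.filter p) := hS.filter p
  rw [List.filter_eq_self.2 hSp] at h1
  exact ((h1.eq_of_length_le (by rwa [← List.countP_eq_length_filter]))).symm

theorem countP_pair [DecidableEq α] {a b : α} (hab : a ≠ b) (l : List α) :
    l.countP (fun x => decide (x = a ∨ x = b)) = l.count a + l.count b := by
  induction l with
  | nil => simp
  | cons x xs ih =>
    rw [List.countP_cons, ih, List.count_cons, List.count_cons]
    by_cases hxa : x = a
    · subst hxa; simp [hab]; omega
    · by_cases hxb : x = b
      · subst hxb; simp [hxa]; omega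
      · simp [hxa, hxb]


/-- The "chain word" of a list `[v₀, v₁, …, v_{k-1}]`:  `v₁ v₀ v₂ v₁ … v_{k-1} v_{k-2}`. -/
def cword : List α → List α
  | x :: y :: r => y :: x :: cword (y :: r)
  | _ => []

@[simp] theorem cword_nil : cword ([] : List α) = [] := rfl
@[simp] theorem cword_singleton (x : α) : cword [x] = [] := rfl
theorem cword_cons_cons (x y : α) (r : List α) :
    cword (x :: y :: r) = y :: x :: cword (y :: r) := rfl

theorem mem_cword {z : α} : ∀ {l : List α}, z ∈ cword l → z ∈ l
  | [], h => by simp [cword] at h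
  | [x], h => by simp [cword] at h
  | x :: y :: r, h => by
    rw [cword_cons_cons] at h
    rcases List.mem_cons.1 h with h | h
    · subst h; simp
    rcases List.mem_cons.1 h with h | h
    · subst h; simp
    · have := mem_cword h
      simp only [List.mem_cons] at this ⊢
      tauto

theorem cword_perm : ∀ l : List α, (cword l).Perm (l.tail ++ l.dropLast)
  | [] => by simp
  | [x] => by simp
  | x :: y :: r => by
    rw [cword_cons_cons]
    have ih := cword_perm (y :: r)
    calc y :: x :: cword (y :: r) ~ y :: x :: (r ++ (y :: r).dropLast) :=
          (ih.cons x).cons y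
      _ ~ (x :: y :: r).tail ++ (x :: y :: r).dropLast := by
          simp only [List.tail_cons, List.dropLast_cons₂]
          refine List.Perm.cons y ?_
          exact (List.perm_middle).symm

/-- Splitting lemma for `cword`. -/
theorem cword_append (l₁ : List α) (x y : α) (l₂ : List α) :
    cword (l₁ ++ x :: y :: l₂) = cword (l₁ ++ [x]) ++ y :: x :: cword (y :: l₂) := by
  induction l₁ with
  | nil => simp [cword_cons_cons]
  | cons a t ih =>
    cases t with
    | nil => simp [cword_cons_cons]
    | cons b r =>
      have h1 : (a :: b :: r) ++ x :: y :: l₂ = a :: b :: (r ++ x :: y :: l₂) := by simp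
      have h2 : (a :: b :: r) ++ [x] = a :: b :: (r ++ [x]) := by simp
      rw [h1, h2, cword_cons_cons, cword_cons_cons]
      have ih' := ih
      simp only [List.cons_append] at ih'
      rw [ih']
      simp

theorem take_getElem_split {l : List α} {j : ℕ} (hj : j < l.length) :
    l = l.take j ++ l[j] :: l.drop (j + 1) := by
  conv_lhs => rw [← List.take_append_drop j l]
  rw [List.drop_eq_getElem_cons hj]

theorem take_succ_getElem {l : List α} {j : ℕ} (hj : j < l.length) :
    l.take (j + 1) = l.take j ++ [l[j]] := by
  rw [List.take_succ]
  simp [List.getElem?_eq_getElem hj]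

/-- Splitting lemma for `cword` at a position. -/
theorem cword_split {l : List α} {j : ℕ} (hj : j + 1 < l.length) :
    cword l = cword (l.take (j + 1)) ++ l[j + 1] :: l[j] :: cword (l.drop (j + 1)) := by
  have hj' : j < l.length := by omega
  have hsplit : l = l.take j ++ l[j] :: l[j+1] :: l.drop (j + 2) := by
    conv_lhs => rw [take_getElem_split hj']
    rw [List.drop_eq_getElem_cons hj]
  conv_lhs => rw [hsplit]
  rw [cword_append, ← take_succ_getElem hj', List.drop_eq_getElem_cons hj]

theorem cw_head {l : List α} (h : 2 ≤ l.length) (h0 : 0 < l.length) : [l[0]].Sublist (cword l) := by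
  match l, h with
  | x :: y :: r, _ =>
    rw [cword_cons_cons]
    simp only [List.getElem_cons_zero]
    exact ((List.nil_sublist _).cons₂ x).cons y

theorem cw_last {l : List α} (h : 2 ≤ l.length) (hlt : l.length - 1 < l.length) :
    [l[l.length - 1]].Sublist (cword l) := by
  have h2 : l.length - 2 + 1 < l.length := by omega
  have := cword_split h2
  have he : l.length - 2 + 1 = l.length - 1 := by omega
  rw [this]
  refine List.Sublist.trans ?_ (List.sublist_append_right _ _)
  simp_rw [he]
  exact (List.nil_sublist _).cons₂ _

theorem cw_two {l : List α} {j : ℕ} (h1 : 1 ≤ j) (h2 : j + 1 < l.length) (hj : j < l.length) :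
    [l[j], l[j]].Sublist (cword l) := by
  rw [cword_split h2]
  have hlen : (l.take (j+1)).length = j + 1 := by
    rw [List.length_take]; omega
  have hlast : (l.take (j+1))[(l.take (j+1)).length - 1]'(by omega) = l[j] := by
    simp_rw [hlen]
    simp [List.getElem_take]
  have hsub1 : [l[j]].Sublist (cword (l.take (j+1))) := by
    rw [← hlast]
    exact cw_last (by omega) (by omega)
  have hsub2 : [l[j]].Sublist (l[j+1] :: l[j] :: cword (l.drop (j+1))) :=
    (((List.nil_sublist _).cons₂ _).cons _)
  exact (List.Sublist.append hsub1 hsub2 : _ )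

theorem count_take_drop [DecidableEq α] {l : List α} (hl : l.Nodup) {j : ℕ} (hj : j < l.length)
    (n : ℕ) : (l.take n).count l[j] = (if j < n then 1 else 0) ∧
      (l.drop n).count l[j] = (if n ≤ j then 1 else 0) := by
  have hcount : l.count l[j] = 1 := List.count_eq_one_of_mem hl (l.getElem_mem hj)
  have hsum : (l.take n).count l[j] + (l.drop n).count l[j] = 1 := by
    rw [← List.count_append, List.take_append_drop]; exact hcount
  by_cases hlt : j < n
  · have hmem : l[j] ∈ l.take n := by
      have hjlen : j < (l.take n).length := by rw [List.length_take]; omega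
      have : (l.take n)[j] = l[j] := List.getElem_take
      rw [← this]; exact List.getElem_mem _
    have h1 : 0 < (l.take n).count l[j] := List.count_pos_iff.2 hmem
    refine ⟨by rw [if_pos hlt]; omega, by rw [if_neg (by omega)]; omega⟩
  · have hmem : l[j] ∈ l.drop n := by
      have h1 : j - n < (l.drop n).length := by rw [List.length_drop]; omega
      have : (l.drop n)[j - n] = l[n + (j - n)] := List.getElem_drop
      have h3 : (l.drop n)[j - n] ∈ l.drop n := List.getElem_mem _
      rw [this] at h3
      simpa [show n + (j - n) = j from by omega] using h3
    have h1 : 0 < (l.drop n).count l[j] := List.count_pos_iff.2 hmem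
    refine ⟨by rw [if_neg hlt]; omega, by rw [if_pos (by omega)]; omega⟩


theorem take_one_eq {l : List α} (h : 0 < l.length) : l.take 1 = [l[0]] := by
  cases l with
  | nil => simp at h
  | cons x xs => simp

theorem drop_pred_eq {l : List α} (h : 0 < l.length) :
    l.drop (l.length - 1) = [l[l.length - 1]] := by
  rw [List.drop_eq_getElem_cons (by omega), show l.length - 1 + 1 = l.length from by omega,
    List.drop_length]

theorem sum_map_support {β : Type*} {L : List β} (hL : L.Nodup) {f : β → ℕ} {i : β}
    (hi : i ∈ L) (h0 : ∀ t ∈ L, t ≠ i → f t = 0) : (L.map f).sum = f i := by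
  induction L with
  | nil => simp at hi
  | cons x xs ih =>
    rcases List.nodup_cons.1 hL with ⟨hx, hxs⟩
    rcases List.mem_cons.1 hi with h | h
    · subst h
      have : (xs.map f).sum = 0 := by
        apply List.sum_eq_zero
        intro y hy
        rcases List.mem_map.1 hy with ⟨t, ht, rfl⟩
        exact h0 t (List.mem_cons_of_mem _ ht) (fun he => hx (he ▸ ht))
      simp [this]
    · have hxi : x ≠ i := fun he => hx (he ▸ h)
      rw [List.map_cons, List.sum_cons, h0 x List.mem_cons_self hxi,
        ih hxs h (fun t ht => h0 t (List.mem_cons_of_mem _ ht))]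
      simp

theorem pair_sublist_getElem {l : List α} {j j' : ℕ} (h : j < j') (hj' : j' < l.length) :
    [l[j]'(by omega), l[j']].Sublist l := by
  conv_rhs => rw [take_getElem_split hj']
  have h1 : [l[j]'(by omega)].Sublist (l.take j') := by
    refine List.singleton_sublist.2 ?_
    have hlen : j < (l.take j').length := by rw [List.length_take]; omega
    have : (l.take j')[j] = l[j]'(by omega) := List.getElem_take
    rw [← this]; exact List.getElem_mem _
  exact List.Sublist.append h1 ((List.nil_sublist _).cons₂ _)

section MW
variable [DecidableEq α] {m : ℕ} (ℓ : Fin m → List α)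

/-- The 3-uniform melon word. -/
def mw : List α :=
  (List.finRange m).flatMap ℓ ++
    ((List.finRange m).flatMap fun t => (ℓ t).take 1) ++
    ((List.finRange m).flatMap fun t => cword (ℓ t)) ++
    ((List.finRange m).flatMap fun t => (ℓ t).drop ((ℓ t).length - 1))

theorem bl_single {β : Type*} (g : Fin m → List β) (t : Fin m) :
    (g t).Sublist ((List.finRange m).flatMap g) := by
  have h := Sublist.flatMap' g (List.singleton_sublist.2 (List.mem_finRange t))
  simpa using h

theorem bl_pair {β : Type*} (g : Fin m → List β) {t t' : Fin m} (h : t < t') :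
    (g t ++ g t').Sublist ((List.finRange m).flatMap g) := by
  have h2 := Sublist.flatMap' g (pair_sublist_finRange h)
  simpa using h2

theorem mem_mw {z : α} {i : Fin m} (hz : z ∈ ℓ i) : z ∈ mw ℓ := by
  have : z ∈ (List.finRange m).flatMap ℓ :=
    List.mem_flatMap.2 ⟨i, List.mem_finRange i, hz⟩
  simp only [mw, List.append_assoc, List.mem_append]
  exact Or.inl this

variable {ℓ}
variable (h2 : ∀ t, 2 ≤ (ℓ t).length) (hnd : ∀ t, (ℓ t).Nodup)
  (hdisj : ∀ t t', t ≠ t' → ∀ z, z ∈ ℓ t → z ∈ ℓ t' → False)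

include h2 hnd hdisj in
theorem mw_count {i : Fin m} {j : ℕ} (hj : j < (ℓ i).length) :
    (mw ℓ).count ((ℓ i)[j]) = 3 := by
  set z := (ℓ i)[j] with hz
  have hzi : z ∈ ℓ i := List.getElem_mem _
  have hnotmem : ∀ t, t ≠ i → z ∉ ℓ t := fun t ht hmem => hdisj t i ht z hmem hzi
  have hcnt : ∀ g : Fin m → List α, (∀ t, t ≠ i → z ∉ g t) →
      ((List.finRange m).flatMap g).count z = (g i).count z := by
    intro g hg
    rw [List.count_flatMap]
    exact sum_map_support (List.nodup_finRange m) (List.mem_finRange i)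
      (fun t _ ht => List.count_eq_zero.2 (hg t ht))
  have c1 : ((List.finRange m).flatMap ℓ).count z = 1 := by
    rw [hcnt ℓ hnotmem]
    exact List.count_eq_one_of_mem (hnd i) hzi
  have c2 : (((List.finRange m).flatMap fun t => (ℓ t).take 1)).count z
      = if j < 1 then 1 else 0 := by
    rw [hcnt _ (fun t ht hmem => hnotmem t ht ((List.take_sublist _ _).mem hmem))]
    exact (count_take_drop (hnd i) hj 1).1
  have c3 : (((List.finRange m).flatMap fun t => cword (ℓ t))).count z
      = (if 1 ≤ j then 1 else 0) + (if j < (ℓ i).length - 1 then 1 else 0) := by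
    rw [hcnt _ (fun t ht hmem => hnotmem t ht (mem_cword hmem))]
    rw [(cword_perm (ℓ i)).count_eq, List.count_append, ← List.drop_one,
      List.dropLast_eq_take]
    rw [(count_take_drop (hnd i) hj 1).2, (count_take_drop (hnd i) hj ((ℓ i).length - 1)).1]
  have c4 : (((List.finRange m).flatMap fun t => (ℓ t).drop ((ℓ t).length - 1))).count z
      = if (ℓ i).length - 1 ≤ j then 1 else 0 := by
    rw [hcnt _ (fun t ht hmem => hnotmem t ht ((List.drop_sublist _ _).mem hmem))]
    exact (count_take_drop (hnd i) hj ((ℓ i).length - 1)).2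
  have hk := h2 i
  rw [mw]
  rw [List.count_append, List.count_append, List.count_append, c1, c2, c3, c4]
  split_ifs <;> omega

end MW

theorem cw_last_take {l : List α} {j : ℕ} (h1 : 1 ≤ j) (hj : j < l.length) :
    [l[j]].Sublist (cword (l.take (j + 1))) := by
  have hlen : (l.take (j + 1)).length = j + 1 := by rw [List.length_take]; omega
  have hlast : (l.take (j + 1))[(l.take (j + 1)).length - 1]'(by omega) = l[j] := by
    simp_rw [hlen]
    simp [List.getElem_take]
  have h := cw_last (l := l.take (j + 1)) (by omega) (by omega)
  rwa [hlast] at h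

theorem cw_head_drop {l : List α} {n : ℕ} (h : n + 1 < l.length) :
    [l[n]].Sublist (cword (l.drop n)) := by
  have hlen : (l.drop n).length = l.length - n := List.length_drop
  have hhead : (l.drop n)[0]'(by omega) = l[n] := by
    rw [List.getElem_drop]; simp
  have hh := cw_head (l := l.drop n) (by omega) (by omega)
  rwa [hhead] at hh

theorem cw_pat {l : List α} (hl2 : 2 ≤ l.length) {j : ℕ} (hj : j < l.length) :
    (if j = 0 then [l[j]] else if j = l.length - 1 then [l[j]] else [l[j], l[j]]).Sublist
      (cword l) := by
  split_ifs with ha hb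
  · subst ha; exact cw_head hl2 (by omega)
  · subst hb; exact cw_last hl2 (by omega)
  · exact cw_two (by omega) (by omega) hj

section MW
variable [DecidableEq α] {m : ℕ} {ℓ : Fin m → List α}
variable (h2 : ∀ t, 2 ≤ (ℓ t).length) (hnd : ∀ t, (ℓ t).Nodup)
  (hdisj : ∀ t t', t ≠ t' → ∀ z, z ∈ ℓ t → z ∈ ℓ t' → False)

include h2 hnd hdisj in
theorem mw_filter_master {i i' : Fin m} {j j' : ℕ} (hj : j < (ℓ i).length)
    (hj' : j' < (ℓ i').length) {S : List α}
    (hef : (ℓ i)[j] ≠ (ℓ i')[j'])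
    (hS : S.Sublist (mw ℓ))
    (hSp : ∀ x ∈ S, x = (ℓ i)[j] ∨ x = (ℓ i')[j'])
    (hlen : 6 ≤ S.length) :
    (mw ℓ).filter (fun x => decide (x = (ℓ i)[j] ∨ x = (ℓ i')[j'])) = S := by
  refine filter_eq_of_sublist hS (fun x hx => by simpa using hSp x hx) ?_
  rw [countP_pair hef, mw_count h2 hnd hdisj hj, mw_count h2 hnd hdisj hj']
  omega

theorem sub4 {S1 S2 S3 S4 : List α}
    (h1 : S1.Sublist ((List.finRange m).flatMap ℓ))
    (h2 : S2.Sublist ((List.finRange m).flatMap fun t => (ℓ t).take 1))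
    (h3 : S3.Sublist ((List.finRange m).flatMap fun t => cword (ℓ t)))
    (h4 : S4.Sublist ((List.finRange m).flatMap fun t => (ℓ t).drop ((ℓ t).length - 1))) :
    (S1 ++ S2 ++ S3 ++ S4).Sublist (mw ℓ) :=
  ((h1.append h2).append h3).append h4

include h2 hnd hdisj in
theorem mw_filter_cons {i : Fin m} {j : ℕ} (hj1 : j + 1 < (ℓ i).length) :
    (mw ℓ).filter (fun x => decide (x = (ℓ i)[j]'(by omega) ∨ x = (ℓ i)[j + 1])) =
      [(ℓ i)[j]'(by omega), (ℓ i)[j + 1], (ℓ i)[j]'(by omega), (ℓ i)[j + 1],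
        (ℓ i)[j]'(by omega), (ℓ i)[j + 1]] := by
  have hk := h2 i
  set l := ℓ i with hl
  have hef : l[j]'(by omega) ≠ l[j + 1] := fun h =>
    absurd ((hnd i).getElem_inj_iff.1 h) (by omega)
  set e := l[j]'(by omega) with he
  set f := l[j + 1] with hf
  set SA : List α := if j = 0 then [e] else [] with hSA
  set SC : List α := (if j = 0 then [] else [e]) ++ ([f, e] ++
      (if j + 1 = l.length - 1 then [] else [f])) with hSC
  set SB : List α := if j + 1 = l.length - 1 then [f] else [] with hSB
  have hsub : ([e, f] ++ SA ++ SC ++ SB).Sublist (mw ℓ) := by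
    refine sub4 ?_ ?_ ?_ ?_
    · exact (pair_sublist_getElem (by omega) hj1).trans (bl_single ℓ i)
    · rw [hSA]; split_ifs with h0
      · subst h0
        have hb := bl_single (m := m) (fun t => (ℓ t).take 1) i
        rwa [take_one_eq (by omega)] at hb
      · exact List.nil_sublist _
    · refine List.Sublist.trans ?_ (bl_single (fun t => cword (ℓ t)) i)
      rw [hSC, cword_split hj1]
      refine List.Sublist.append ?_ ?_
      · split_ifs with h0
        · exact List.nil_sublist _
        · exact cw_last_take (by omega) (by omega)
      · have piece3 : (if j + 1 = l.length - 1 then ([] : List α) else [f]).Sublist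
            (cword (l.drop (j + 1))) := by
          split_ifs with hlast
          · exact List.nil_sublist _
          · exact cw_head_drop (by omega)
        exact (piece3.cons₂ e).cons₂ f
    · rw [hSB]; split_ifs with hlast
      · have hb := bl_single (m := m) (fun t => (ℓ t).drop ((ℓ t).length - 1)) i
        rw [drop_pred_eq (l := ℓ i) (by omega)] at hb
        simp only [← hl] at hb
        simp only [show l.length - 1 = j + 1 from by omega] at hb
        exact hb
      · exact List.nil_sublist _
  have hSeq : [e, f] ++ SA ++ SC ++ SB = [e, f, e, f, e, f] := by
    rw [hSA, hSC, hSB]; split_ifs <;> simp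
  rw [hSeq] at hsub
  refine mw_filter_master h2 hnd hdisj (by omega) hj1 hef hsub ?_ (by simp)
  intro x hx
  simp only [List.mem_cons, List.not_mem_nil, or_false] at hx
  tauto

include h2 hnd hdisj in
theorem mw_filter_gap {i : Fin m} {j j' : ℕ} (hgap : j + 2 ≤ j') (hj' : j' < (ℓ i).length) :
    (mw ℓ).filter (fun x => decide (x = (ℓ i)[j]'(by omega) ∨ x = (ℓ i)[j'])) =
      [(ℓ i)[j]'(by omega), (ℓ i)[j'], (ℓ i)[j]'(by omega), (ℓ i)[j]'(by omega),
        (ℓ i)[j'], (ℓ i)[j']] := by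
  have hk := h2 i
  set l := ℓ i with hl
  have hef : l[j]'(by omega) ≠ l[j'] := fun h =>
    absurd ((hnd i).getElem_inj_iff.1 h) (by omega)
  set e := l[j]'(by omega) with he
  set f := l[j'] with hf
  have hj1 : j + 1 < l.length := by omega
  set SA : List α := if j = 0 then [e] else [] with hSA
  set fpart : List α := if j' = l.length - 1 then [f] else [f, f] with hfpart
  set SC : List α := (if j = 0 then [] else [e]) ++ ([e] ++ fpart) with hSC
  set SB : List α := if j' = l.length - 1 then [f] else [] with hSB
  have hsub : ([e, f] ++ SA ++ SC ++ SB).Sublist (mw ℓ) := by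
    refine sub4 ?_ ?_ ?_ ?_
    · exact (pair_sublist_getElem (by omega) hj').trans (bl_single ℓ i)
    · rw [hSA]; split_ifs with h0
      · subst h0
        have hb := bl_single (m := m) (fun t => (ℓ t).take 1) i
        rwa [take_one_eq (by omega)] at hb
      · exact List.nil_sublist _
    · refine List.Sublist.trans ?_ (bl_single (fun t => cword (ℓ t)) i)
      rw [hSC, cword_split hj1]
      refine List.Sublist.append ?_ ?_
      · split_ifs with h0
        · exact List.nil_sublist _
        · exact cw_last_take (by omega) (by omega)
      · have hfsub : fpart.Sublist (cword (l.drop (j + 1))) := by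
          have hgd : (l.drop (j + 1))[j' - j - 1]'(by
              rw [List.length_drop]; omega) = l[j'] := by
            rw [List.getElem_drop]
            simp only [show j + 1 + (j' - j - 1) = j' from by omega]
          rw [hfpart]; split_ifs with hlast
          · have hc := cw_last (l := l.drop (j + 1)) (by rw [List.length_drop]; omega)
              (by rw [List.length_drop]; omega)
            have hidx : (l.drop (j + 1)).length - 1 = j' - j - 1 := by
              rw [List.length_drop]; omega
            simp only [hidx] at hc
            rwa [hgd] at hc
          · have hc := cw_two (l := l.drop (j + 1)) (j := j' - j - 1) (by omega)
              (by rw [List.length_drop]; omega) (by rw [List.length_drop]; omega)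
            rwa [hgd] at hc
        have : ([e] ++ fpart).Sublist (l[j + 1] :: e :: cword (l.drop (j + 1))) := by
          have h1 : (e :: fpart).Sublist (e :: cword (l.drop (j + 1))) := hfsub.cons₂ e
          exact (h1.cons (l[j + 1]))
        exact this
    · rw [hSB]; split_ifs with hlast
      · have hb := bl_single (m := m) (fun t => (ℓ t).drop ((ℓ t).length - 1)) i
        rw [drop_pred_eq (l := ℓ i) (by omega)] at hb
        simp only [← hl] at hb
        simp only [show l.length - 1 = j' from by omega] at hb
        exact hb
      · exact List.nil_sublist _
  have hSeq : [e, f] ++ SA ++ SC ++ SB = [e, f, e, e, f, f] := by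
    rw [hSA, hSC, hSB, hfpart]; split_ifs <;> simp
  rw [hSeq] at hsub
  refine mw_filter_master h2 hnd hdisj (by omega) hj' hef hsub ?_ (by simp)
  intro x hx
  simp only [List.mem_cons, List.not_mem_nil, or_false] at hx
  tauto

include h2 hnd hdisj in
theorem mw_filter_cross {i i' : Fin m} {j j' : ℕ} (hii' : i < i') (hj : j < (ℓ i).length)
    (hj' : j' < (ℓ i').length) :
    (mw ℓ).filter (fun x => decide (x = (ℓ i)[j] ∨ x = (ℓ i')[j'])) =
      [(ℓ i)[j], (ℓ i')[j']] ++
      ((if j = 0 then [(ℓ i)[j]] else []) ++ (if j' = 0 then [(ℓ i')[j']] else [])) ++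
      ((if j = 0 then [(ℓ i)[j]] else if j = (ℓ i).length - 1 then [(ℓ i)[j]]
          else [(ℓ i)[j], (ℓ i)[j]]) ++
        (if j' = 0 then [(ℓ i')[j']] else if j' = (ℓ i').length - 1 then [(ℓ i')[j']]
          else [(ℓ i')[j'], (ℓ i')[j']])) ++
      ((if j = (ℓ i).length - 1 then [(ℓ i)[j]] else []) ++
        (if j' = (ℓ i').length - 1 then [(ℓ i')[j']] else [])) := by
  have hk := h2 i
  have hk' := h2 i'
  set e := (ℓ i)[j] with he
  set f := (ℓ i')[j'] with hf
  have hef : e ≠ f := fun h =>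
    hdisj i i' (Fin.ne_of_lt hii') e (List.getElem_mem _) (h ▸ List.getElem_mem _)
  refine mw_filter_master h2 hnd hdisj hj hj' hef ?_ ?_ ?_
  · refine sub4 ?_ ?_ ?_ ?_
    · exact ((List.singleton_sublist.2 (List.getElem_mem _)).append
        (List.singleton_sublist.2 (List.getElem_mem _))).trans (bl_pair ℓ hii')
    · refine List.Sublist.trans (List.Sublist.append ?_ ?_)
        (bl_pair (fun t => (ℓ t).take 1) hii')
      · split_ifs with h0
        · subst h0
          show [(ℓ i)[0]] <+ (ℓ i).take 1
          rw [take_one_eq (by omega)]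
        · exact List.nil_sublist _
      · split_ifs with h0
        · subst h0
          show [(ℓ i')[0]] <+ (ℓ i').take 1
          rw [take_one_eq (by omega)]
        · exact List.nil_sublist _
    · exact (List.Sublist.append (cw_pat hk hj) (cw_pat hk' hj')).trans
        (bl_pair (fun t => cword (ℓ t)) hii')
    · refine List.Sublist.trans (List.Sublist.append ?_ ?_)
        (bl_pair (fun t => (ℓ t).drop ((ℓ t).length - 1)) hii')
      · split_ifs with h0
        · show [(ℓ i)[j]] <+ (ℓ i).drop ((ℓ i).length - 1)
          rw [drop_pred_eq (by omega)]
          simp only [show (ℓ i).length - 1 = j from h0.symm]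
          exact List.Sublist.refl _
        · exact List.nil_sublist _
      · split_ifs with h0
        · show [(ℓ i')[j']] <+ (ℓ i').drop ((ℓ i').length - 1)
          rw [drop_pred_eq (by omega)]
          simp only [show (ℓ i').length - 1 = j' from h0.symm]
          exact List.Sublist.refl _
        · exact List.nil_sublist _
  · intro x hx
    revert hx
    split_ifs <;> (intro hx; simp only [List.mem_append, List.mem_cons,
      List.not_mem_nil, or_false] at hx <;> tauto)
  · split_ifs <;> simp <;> omega

end MW

theorem alt_symm {V : Type*} [DecidableEq V] (w : List V) (a b : V) :
    Alternates w a b ↔ Alternates w b a := by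
  unfold Alternates
  have hp : (fun x => decide (x = a ∨ x = b)) = (fun x => decide (x = b ∨ x = a)) := by
    funext x; exact decide_eq_decide.2 or_comm
  rw [hp]

section MW
variable [DecidableEq α] {m : ℕ} {ℓ : Fin m → List α}
variable (h2 : ∀ t, 2 ≤ (ℓ t).length) (hnd : ∀ t, (ℓ t).Nodup)
  (hdisj : ∀ t t', t ≠ t' → ∀ z, z ∈ ℓ t → z ∈ ℓ t' → False)

include h2 hnd hdisj in
theorem mw_alt_lt {i i' : Fin m} {j j' : ℕ} (hii' : i < i') (hj : j < (ℓ i).length)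
    (hj' : j' < (ℓ i').length) :
    Alternates (mw ℓ) ((ℓ i)[j]) ((ℓ i')[j']) ↔
      ((j = 0 ∧ j' = 0) ∨ (j = (ℓ i).length - 1 ∧ j' = (ℓ i').length - 1)) := by
  have hk := h2 i
  have hk' := h2 i'
  have hef : (ℓ i)[j] ≠ (ℓ i')[j'] := by
    intro h
    refine hdisj i i' (Fin.ne_of_lt hii') ((ℓ i)[j]) (List.getElem_mem _) ?_
    rw [h]; exact List.getElem_mem _
  rw [Alternates, mw_filter_cross h2 hnd hdisj hii' hj hj']
  by_cases h1 : j = 0 <;> by_cases h2' : j = (ℓ i).length - 1 <;>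
    by_cases h3 : j' = 0 <;> by_cases h4 : j' = (ℓ i').length - 1 <;>
    first
      | (exfalso; omega)
      | (simp only [h1, h2', h3, h4] at hef ⊢
         simp [hef, Ne.symm hef, List.Chain', List.isChain_cons_cons,
          (show ¬((ℓ i).length - 1 = 0) from by omega),
          (show ¬((0 : ℕ) = (ℓ i).length - 1) from by omega),
          (show ¬((ℓ i').length - 1 = 0) from by omega),
          (show ¬((0 : ℕ) = (ℓ i').length - 1) from by omega)])

include h2 hnd hdisj in
theorem mw_alt_same {i : Fin m} {j j' : ℕ} (hjj' : j < j') (hj' : j' < (ℓ i).length) :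
    Alternates (mw ℓ) ((ℓ i)[j]'(by omega)) ((ℓ i)[j']) ↔ j' = j + 1 := by
  have hef : (ℓ i)[j]'(by omega) ≠ (ℓ i)[j'] := fun h =>
    absurd ((hnd i).getElem_inj_iff.1 h) (by omega)
  by_cases hc : j' = j + 1
  · subst hc
    rw [Alternates, mw_filter_cons h2 hnd hdisj hj']
    simp [hef, Ne.symm hef, List.Chain', List.isChain_cons_cons]
  · rw [Alternates, mw_filter_gap h2 hnd hdisj (by omega) hj']
    simp [hc, List.Chain', List.isChain_cons_cons]

include h2 hnd hdisj in
theorem mw_alt_iff {i i' : Fin m} {j j' : ℕ} (hj : j < (ℓ i).length)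
    (hj' : j' < (ℓ i').length) (hef : (ℓ i)[j] ≠ (ℓ i')[j']) :
    Alternates (mw ℓ) ((ℓ i)[j]) ((ℓ i')[j']) ↔
      ((i = i' ∧ (j' = j + 1 ∨ j = j' + 1)) ∨
        (i ≠ i' ∧ ((j = 0 ∧ j' = 0) ∨
          (j = (ℓ i).length - 1 ∧ j' = (ℓ i').length - 1)))) := by
  rcases lt_trichotomy i i' with h | h | h
  · have hne : i ≠ i' := Fin.ne_of_lt h
    rw [mw_alt_lt h2 hnd hdisj h hj hj']
    simp [hne]
  · subst h
    have hjj : j ≠ j' := fun hh => hef (by simp [hh])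
    rcases Nat.lt_or_ge j j' with hlt | hge
    · rw [mw_alt_same h2 hnd hdisj hlt hj']
      constructor
      · intro hh; exact Or.inl ⟨rfl, Or.inl hh⟩
      · rintro (⟨-, hh | hh⟩ | ⟨hne, -⟩)
        · exact hh
        · omega
        · exact absurd rfl hne
    · have hlt : j' < j := by omega
      rw [alt_symm, mw_alt_same h2 hnd hdisj hlt hj]
      constructor
      · intro hh; exact Or.inl ⟨rfl, Or.inr hh⟩
      · rintro (⟨-, hh | hh⟩ | ⟨hne, -⟩)
        · omega
        · exact hh
        · exact absurd rfl hne
  · have hne : i ≠ i' := (Fin.ne_of_lt h).symm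
    rw [alt_symm, mw_alt_lt h2 hnd hdisj h hj' hj]
    constructor
    · rintro (⟨ha, hb⟩ | ⟨ha, hb⟩)
      · exact Or.inr ⟨hne, Or.inl ⟨hb, ha⟩⟩
      · exact Or.inr ⟨hne, Or.inr ⟨hb, ha⟩⟩
    · rintro (⟨he', -⟩ | ⟨-, (⟨ha, hb⟩ | ⟨ha, hb⟩)⟩)
      · exact absurd he' hne
      · exact Or.inl ⟨hb, ha⟩
      · exact Or.inr ⟨hb, ha⟩

end MW

variable {V : Type*}

theorem walk_support_zero {G : SimpleGraph V} {u v : V} (p : G.Walk u v)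
    (h : 0 < p.support.length) : p.support[0] = u := by
  cases p <;> simp [SimpleGraph.Walk.support_cons]

theorem walk_support_last {G : SimpleGraph V} {u v : V} (p : G.Walk u v)
    (h : p.support.length - 1 < p.support.length) :
    p.support[p.support.length - 1] = v := by
  have h2 := SimpleGraph.Walk.getLast_support p
  rwa [List.getLast_eq_getElem] at h2

theorem walk_edges_getElem {G : SimpleGraph V} {u v : V} (p : G.Walk u v) {j : ℕ}
    (hj : j < p.length) :
    p.edges[j]'(by rw [SimpleGraph.Walk.length_edges]; exact hj) =
      s(p.support[j]'(by rw [SimpleGraph.Walk.length_support]; omega),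
        p.support[j + 1]'(by rw [SimpleGraph.Walk.length_support]; omega)) := by
  induction p generalizing j with
  | nil => simp at hj
  | @cons a b c h q ih =>
    cases j with
    | zero =>
      simp only [SimpleGraph.Walk.edges_cons, SimpleGraph.Walk.support_cons,
        List.getElem_cons_zero, List.getElem_cons_succ]
      rw [walk_support_zero q (by simp [SimpleGraph.Walk.length_support])]
    | succ n =>
      have hn : n < q.length := by simpa [SimpleGraph.Walk.length_cons] using hj
      simp only [SimpleGraph.Walk.edges_cons, SimpleGraph.Walk.support_cons,
        List.getElem_cons_succ]
      exact ih hn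

end MelonAux

end MelonAuxiliary

open MelonAux

/-- If the endpoints of a melon graph are not adjacent (no constituent path has
length one), then its line graph is 3-word-representable. -/
theorem melon_lineGraph_three_word_representable {V : Type*} [Fintype V] [DecidableEq V]
    (G : SimpleGraph V) (m : ℕ) (x y : V) (P : Fin m → G.Walk x y)
    (hM : IsMelon G m x y P) (hne : ∀ i, (P i).length ≠ 1) :
    KWordRepresentable G.lineGraph 3 := by
  set ℓ : Fin m → List G.edgeSet := fun i =>
    (P i).edges.pmap (fun e he => (⟨e, he⟩ : G.edgeSet))
      (fun e he => (P i).edges_subset_edgeSet he) with hℓdef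
  have hlenℓ : ∀ i, (ℓ i).length = (P i).length := fun i => by
    simp [hℓdef, SimpleGraph.Walk.length_edges]
  have h2 : ∀ i, 2 ≤ (ℓ i).length := fun i => by
    rw [hlenℓ]
    have ha := hM.one_le_length i
    have hb := hne i
    omega
  have hget : ∀ (i : Fin m) (j : ℕ) (hj : j < (ℓ i).length),
      ((ℓ i)[j] : Sym2 V) = (P i).edges[j]'(by simpa [hℓdef] using hj) := by
    intro i j hj
    simp [hℓdef, List.getElem_pmap]
  have hnd : ∀ i, (ℓ i).Nodup := by
    intro i
    exact List.Nodup.pmap (fun a ha b hb h => congrArg Subtype.val h)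
      (SimpleGraph.Walk.edges_nodup_of_support_nodup (hM.isPath i).support_nodup)
  -- membership of vertices in edges, by index
  have hsup : ∀ (i : Fin m) (j : ℕ) (hj : j < (P i).length) (z : V),
      z ∈ (((ℓ i)[j]'(by rw [hlenℓ]; exact hj)) : Sym2 V) →
      (z = (P i).support[j]'(by rw [SimpleGraph.Walk.length_support]; omega) ∨
        z = (P i).support[j + 1]'(by rw [SimpleGraph.Walk.length_support]; omega)) := by
    intro i j hj z hz
    rw [hget i j (by rw [hlenℓ]; exact hj), walk_edges_getElem (P i) hj] at hz
    exact Sym2.mem_iff.1 hz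
  have hsupmem : ∀ (i : Fin m) (j : ℕ) (hj : j < (P i).length) (z : V),
      z ∈ (((ℓ i)[j]'(by rw [hlenℓ]; exact hj)) : Sym2 V) → z ∈ (P i).support := by
    intro i j hj z hz
    rcases hsup i j hj z hz with h | h <;> (rw [h]; exact List.getElem_mem _)
  have hx0 : ∀ (i : Fin m) (j : ℕ) (hj : j < (P i).length),
      x ∈ (((ℓ i)[j]'(by rw [hlenℓ]; exact hj)) : Sym2 V) → j = 0 := by
    intro i j hj hmem
    have h0 : (P i).support[0]'(by rw [SimpleGraph.Walk.length_support]; omega) = x :=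
      walk_support_zero _ (by rw [SimpleGraph.Walk.length_support]; omega)
    rcases hsup i j hj x hmem with h | h
    · exact ((hM.isPath i).support_nodup.getElem_inj_iff.1 (h.symm.trans h0.symm)).symm ▸ rfl
    · exfalso
      have := (hM.isPath i).support_nodup.getElem_inj_iff.1 (h.symm.trans h0.symm)
      omega
  have hylast : ∀ (i : Fin m) (j : ℕ) (hj : j < (P i).length),
      y ∈ (((ℓ i)[j]'(by rw [hlenℓ]; exact hj)) : Sym2 V) → j = (P i).length - 1 := by
    intro i j hj hmem
    have hL : (P i).support[(P i).length]'(by rw [SimpleGraph.Walk.length_support]; omega)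
        = y := by
      have h3 := walk_support_last (P i)
        (by rw [SimpleGraph.Walk.length_support]; omega)
      simpa [SimpleGraph.Walk.length_support] using h3
    rcases hsup i j hj y hmem with h | h
    · exfalso
      have := (hM.isPath i).support_nodup.getElem_inj_iff.1 (h.symm.trans hL.symm)
      omega
    · have := (hM.isPath i).support_nodup.getElem_inj_iff.1 (h.symm.trans hL.symm)
      omega
  have hshare : ∀ (i i' : Fin m), i ≠ i' → ∀ (j j' : ℕ) (hj : j < (P i).length)
      (hj' : j' < (P i').length) (z : V),
      z ∈ (((ℓ i)[j]'(by rw [hlenℓ]; exact hj)) : Sym2 V) →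
      z ∈ (((ℓ i')[j']'(by rw [hlenℓ]; exact hj')) : Sym2 V) →
      ((z = x ∧ j = 0 ∧ j' = 0) ∨
        (z = y ∧ j = (P i).length - 1 ∧ j' = (P i').length - 1)) := by
    intro i i' hii j j' hj hj' z hz1 hz2
    rcases hM.internallyDisjoint i i' hii z (hsupmem i j hj z hz1) (hsupmem i' j' hj' z hz2)
      with rfl | rfl
    · exact Or.inl ⟨rfl, hx0 i j hj hz1, hx0 i' j' hj' hz2⟩
    · exact Or.inr ⟨rfl, hylast i j hj hz1, hylast i' j' hj' hz2⟩
  have hdisjE : ∀ t t', t ≠ t' → ∀ z, z ∈ ℓ t → z ∈ ℓ t' → False := by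
    intro i i' hii z hzi hzi'
    obtain ⟨j, hj, hje⟩ := List.getElem_of_mem hzi
    obtain ⟨j', hj', hje'⟩ := List.getElem_of_mem hzi'
    have hjP : j < (P i).length := by rw [← hlenℓ]; exact hj
    have hj'P : j' < (P i').length := by rw [← hlenℓ]; exact hj'
    have hkP : 2 ≤ (P i).length := by rw [← hlenℓ]; exact h2 i
    -- the two endpoints of the edge z
    have hedge : ((ℓ i)[j] : Sym2 V) =
        s((P i).support[j]'(by rw [SimpleGraph.Walk.length_support]; omega),
          (P i).support[j + 1]'(by rw [SimpleGraph.Walk.length_support]; omega)) := by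
      rw [hget i j hj, walk_edges_getElem (P i) hjP]
    have hmem_a : (P i).support[j]'(by rw [SimpleGraph.Walk.length_support]; omega)
        ∈ ((ℓ i)[j] : Sym2 V) := by rw [hedge]; exact Sym2.mem_mk_left _ _
    have hmem_b : (P i).support[j + 1]'(by rw [SimpleGraph.Walk.length_support]; omega)
        ∈ ((ℓ i)[j] : Sym2 V) := by rw [hedge]; exact Sym2.mem_mk_right _ _
    have hz12 : (ℓ i)[j] = (ℓ i')[j'] := by rw [hje, hje']
    have hmem_a' := hmem_a
    have hmem_b' := hmem_b
    rw [hz12] at hmem_a' hmem_b'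
    have hab : (P i).support[j]'(by rw [SimpleGraph.Walk.length_support]; omega) ≠
        (P i).support[j + 1]'(by rw [SimpleGraph.Walk.length_support]; omega) := by
      intro h
      have := (hM.isPath i).support_nodup.getElem_inj_iff.1 h
      omega
    rcases hshare i i' hii j j' hjP hj'P _ hmem_a hmem_a' with ⟨ha, hj1, -⟩ | ⟨ha, hj1, -⟩ <;>
      rcases hshare i i' hii j j' hjP hj'P _ hmem_b hmem_b' with ⟨hb, hj2, -⟩ | ⟨hb, hj2, -⟩
    · exact hab (ha.trans hb.symm)
    · omega
    · omega
    · exact hab (ha.trans hb.symm)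
  -- the adjacency bridge
  have hAdj : ∀ (i i' : Fin m) (j j' : ℕ) (hj : j < (ℓ i).length) (hj' : j' < (ℓ i').length),
      (ℓ i)[j] ≠ (ℓ i')[j'] →
      (G.lineGraph.Adj ((ℓ i)[j]) ((ℓ i')[j']) ↔
        ((i = i' ∧ (j' = j + 1 ∨ j = j' + 1)) ∨
          (i ≠ i' ∧ ((j = 0 ∧ j' = 0) ∨
            (j = (ℓ i).length - 1 ∧ j' = (ℓ i').length - 1))))) := by
    intro i i' j j' hj hj' hef
    have hjP : j < (P i).length := by rw [← hlenℓ]; exact hj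
    have hj'P : j' < (P i').length := by rw [← hlenℓ]; exact hj'
    rw [SimpleGraph.lineGraph_adj_iff_exists]
    constructor
    · rintro ⟨-, v, hv1, hv2⟩
      by_cases hii : i = i'
      · subst hii
        left
        refine ⟨rfl, ?_⟩
        have hjj : j ≠ j' := by
          intro hh
          apply hef
          simp [hh]
        have h1 := hsup i j hjP v hv1
        have h2' := hsup i j' hj'P v hv2
        have hndS := (hM.isPath i).support_nodup
        rcases h1 with h1 | h1 <;> rcases h2' with h2' | h2'
        · exact absurd (hndS.getElem_inj_iff.1 (h1.symm.trans h2')) hjj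
        · have := hndS.getElem_inj_iff.1 (h1.symm.trans h2')
          omega
        · have := hndS.getElem_inj_iff.1 (h1.symm.trans h2')
          omega
        · have := hndS.getElem_inj_iff.1 (h1.symm.trans h2')
          omega
      · right
        refine ⟨hii, ?_⟩
        rcases hshare i i' hii j j' hjP hj'P v hv1 hv2 with ⟨-, hj1, hj2⟩ | ⟨-, hj1, hj2⟩
        · exact Or.inl ⟨hj1, hj2⟩
        · refine Or.inr ⟨?_, ?_⟩
          · rw [hlenℓ]; exact hj1
          · rw [hlenℓ]; exact hj2
    · rintro (⟨rfl, hc | hc⟩ | ⟨hii, ⟨hj0, hj'0⟩ | ⟨hjl, hj'l⟩⟩)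
      · subst hc
        refine ⟨hef, (P i).support[j + 1]'(by rw [SimpleGraph.Walk.length_support]; omega),
          ?_, ?_⟩
        · rw [hget i j hj, walk_edges_getElem (P i) hjP]
          exact Sym2.mem_mk_right _ _
        · rw [hget i (j + 1) hj', walk_edges_getElem (P i) hj'P]
          exact Sym2.mem_mk_left _ _
      · subst hc
        refine ⟨hef, (P i).support[j' + 1]'(by rw [SimpleGraph.Walk.length_support]; omega),
          ?_, ?_⟩
        · rw [hget i (j' + 1) hj, walk_edges_getElem (P i) hjP]
          exact Sym2.mem_mk_left _ _
        · rw [hget i j' hj', walk_edges_getElem (P i) hj'P]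
          exact Sym2.mem_mk_right _ _
      · subst hj0
        subst hj'0
        refine ⟨hef, x, ?_, ?_⟩
        · rw [hget i 0 hj, walk_edges_getElem (P i) hjP,
            walk_support_zero (P i) (by rw [SimpleGraph.Walk.length_support]; omega)]
          exact Sym2.mem_mk_left _ _
        · rw [hget i' 0 hj', walk_edges_getElem (P i') hj'P,
            walk_support_zero (P i') (by rw [SimpleGraph.Walk.length_support]; omega)]
          exact Sym2.mem_mk_left _ _
      · refine ⟨hef, y, ?_, ?_⟩
        · have hjP' : j = (P i).length - 1 := by rw [← hlenℓ]; exact hjl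
          rw [hget i j hj, walk_edges_getElem (P i) hjP]
          have hL : (P i).support[j + 1]'(by rw [SimpleGraph.Walk.length_support]; omega)
              = y := by
            have h3 := walk_support_last (P i)
              (by rw [SimpleGraph.Walk.length_support]; omega)
            have hkP : 2 ≤ (P i).length := by rw [← hlenℓ]; exact h2 i
            simp only [SimpleGraph.Walk.length_support] at h3
            simpa [show (P i).length + 1 - 1 = j + 1 from by omega] using h3
          rw [hL]
          exact Sym2.mem_mk_right _ _
        · have hjP' : j' = (P i').length - 1 := by rw [← hlenℓ]; exact hj'l
          rw [hget i' j' hj', walk_edges_getElem (P i') hj'P]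
          have hL : (P i').support[j' + 1]'(by rw [SimpleGraph.Walk.length_support]; omega)
              = y := by
            have h3 := walk_support_last (P i')
              (by rw [SimpleGraph.Walk.length_support]; omega)
            have hkP : 2 ≤ (P i').length := by rw [← hlenℓ]; exact h2 i'
            simp only [SimpleGraph.Walk.length_support] at h3
            simpa [show (P i').length + 1 - 1 = j' + 1 from by omega] using h3
          rw [hL]
          exact Sym2.mem_mk_right _ _
  -- membership of every vertex
  have hmemall : ∀ v : G.edgeSet, ∃ i, v ∈ ℓ i := by
    intro v
    obtain ⟨i, hvi⟩ := hM.edge_cover ↑v v.2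
    refine ⟨i, ?_⟩
    rw [hℓdef]
    exact List.mem_pmap.2 ⟨↑v, hvi, by simp⟩
  refine ⟨mw ℓ, ?_, ?_, ?_⟩
  · intro v
    obtain ⟨i, hvℓ⟩ := hmemall v
    obtain ⟨j, hj, hje⟩ := List.getElem_of_mem hvℓ
    rw [← hje]
    exact mw_count h2 hnd hdisjE hj
  · intro v
    obtain ⟨i, hvℓ⟩ := hmemall v
    exact mem_mw ℓ hvℓ
  · intro a b hab
    obtain ⟨i, haℓ⟩ := hmemall a
    obtain ⟨i', hbℓ⟩ := hmemall b
    obtain ⟨j, hj, hja⟩ := List.getElem_of_mem haℓ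
    obtain ⟨j', hj', hjb⟩ := List.getElem_of_mem hbℓ
    have hef : (ℓ i)[j] ≠ (ℓ i')[j'] := by rw [hja, hjb]; exact hab
    rw [← hja, ← hjb]
    rw [hAdj i i' j j' hj hj' hef]
    exact (mw_alt_iff h2 hnd hdisjE hj hj' hef).symm
end

section
/- For m ≥ 2, let H be the simple graph on the 2m+1 vertices a_1, …, a_m, b_1, …, b_m, x whose edges are: all pairs {a_i, a_j} with i ≠ j; all pairs {b_i, b_j} with i ≠ j; all pairs {x, y} for every other vertex y; and the two pairs {a_1, b_1} and {a_2, b_2}. Then H is permutationally 3-representable. -/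
open SimpleGraph

variable {V : Type*}

/-- The graph `H` on the `2m+1` vertices `a₁, …, aₘ, b₁, …, bₘ, x`: the `aᵢ`'s form
a clique, the `bᵢ`'s form a clique, `x` is adjacent to every other vertex, and the
only further edges are `{a₁, b₁}` and `{a₂, b₂}`. -/
def HGraph (m : ℕ) : SimpleGraph ((Fin m ⊕ Fin m) ⊕ Unit) :=
  SimpleGraph.fromRel fun p q =>
    (∃ i j : Fin m, i ≠ j ∧ p = .inl (.inl i) ∧ q = .inl (.inl j)) ∨
    (∃ i j : Fin m, i ≠ j ∧ p = .inl (.inr i) ∧ q = .inl (.inr j)) ∨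
    (p = .inr ()) ∨
    (∃ i : Fin m, i.val < 2 ∧ p = .inl (.inl i) ∧ q = .inl (.inr i))


namespace HGraphAux
open List

section Generic
variable {α : Type*}

/-- Instance-free count. -/
def cnt [DecidableEq α] (a : α) (l : List α) : ℕ := l.countP (fun x => decide (x = a))

lemma count_eq_cnt [DecidableEq α] (a : α) (l : List α) : l.count a = cnt a l := by
  rw [List.count_eq_countP, cnt]
  apply List.countP_congr
  intro x _
  simp

variable [DecidableEq α]

@[simp] lemma cnt_nil (a : α) : cnt a ([] : List α) = 0 := rfl

lemma cnt_cons (a b : α) (l : List α) :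
    cnt a (b :: l) = cnt a l + if b = a then 1 else 0 := by
  simp [cnt, List.countP_cons]

lemma cnt_append (a : α) (l₁ l₂ : List α) : cnt a (l₁ ++ l₂) = cnt a l₁ + cnt a l₂ := by
  simp [cnt]

lemma cnt_eq_zero {a : α} {l : List α} : cnt a l = 0 ↔ a ∉ l := by
  simp [cnt]
  constructor
  · intro h ha; exact h a ha rfl
  · intro h x hx hxa; exact h (hxa ▸ hx)

lemma cnt_eq_one_of_mem {a : α} {l : List α} (d : l.Nodup) (h : a ∈ l) : cnt a l = 1 := by
  induction l with
  | nil => simp at h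
  | cons b l ih =>
    rcases List.nodup_cons.1 d with ⟨hb, hl⟩
    rcases List.mem_cons.1 h with rfl | h'
    · rw [cnt_cons, if_pos rfl, cnt_eq_zero.2 hb]
    · rw [cnt_cons, ih hl h', if_neg]
      rintro rfl; exact hb h'

lemma cnt_filter {a : α} {p : α → Bool} (hp : p a = true) (l : List α) :
    cnt a (l.filter p) = cnt a l := by
  rw [cnt, List.countP_filter]
  apply List.countP_congr
  intro x _
  by_cases hx : x = a
  · subst hx; simp [hp]
  · simp [hx]

lemma cnt_map_of_injective {β : Type*} [DecidableEq β] (f : α → β)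
    (hf : Function.Injective f) (i : α) (l : List α) : cnt (f i) (l.map f) = cnt i l := by
  rw [cnt, List.countP_map, cnt]
  apply List.countP_congr
  intro x _
  simp [Function.comp, hf.eq_iff]

lemma mem_of_cnt_eq_one {a : α} {l : List α} (h : cnt a l = 1) : a ∈ l := by
  by_contra hc
  rw [cnt_eq_zero.2 hc] at h
  exact one_ne_zero h.symm

/-- A list whose elements are all `a` or `b`, containing each exactly once,
is `[a,b]` or `[b,a]`. -/
lemma pair_list {a b : α} (hab : a ≠ b) :
    ∀ l : List α, (∀ x ∈ l, x = a ∨ x = b) → cnt a l = 1 → cnt b l = 1 →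
      l = [a, b] ∨ l = [b, a] := by
  intro l hmem ha hb
  match l with
  | [] => simp at ha
  | [x] =>
    rcases hmem x (by simp) with rfl | rfl
    · simp [cnt_cons, hab] at hb
    · simp [cnt_cons, hab.symm] at ha
  | [x, y] =>
    rcases hmem x (by simp) with rfl | rfl <;> rcases hmem y (by simp) with rfl | rfl
    · simp [cnt_cons, hab] at hb
    · left; rfl
    · right; rfl
    · simp [cnt_cons, hab.symm] at ha
  | x :: y :: z :: t =>
    exfalso
    rcases hmem x (by simp) with rfl | rfl <;>
      rcases hmem y (by simp [List.mem_cons]) with rfl | rfl <;>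
      rcases hmem z (by simp [List.mem_cons]) with rfl | rfl <;>
      simp [cnt_cons, hab, hab.symm] at ha hb <;> omega

lemma single_list {a b : α} :
    ∀ l : List α, (∀ x ∈ l, x = a ∨ x = b) → cnt a l = 0 → cnt b l = 1 →
      l = [b] := by
  intro l hmem ha hb
  match l with
  | [] => simp at hb
  | [x] =>
    rcases hmem x (by simp) with rfl | rfl
    · simp [cnt_cons] at ha
    · rfl
  | x :: y :: t =>
    exfalso
    rcases hmem x (by simp) with rfl | rfl <;>
      rcases hmem y (by simp [List.mem_cons]) with rfl | rfl <;>
      simp [cnt_cons] at ha hb <;> omega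

lemma filter_pair {a b : α} (hab : a ≠ b) {l : List α}
    (ha : cnt a l = 1) (hb : cnt b l = 1) :
    l.filter (fun y => decide (y = a ∨ y = b)) = [a, b] ∨
      l.filter (fun y => decide (y = a ∨ y = b)) = [b, a] := by
  apply pair_list hab
  · intro x hx
    simpa using (List.mem_filter.1 hx).2
  · rw [cnt_filter (by simp)]; exact ha
  · rw [cnt_filter (by simp)]; exact hb

lemma filter_single {a b : α} {l : List α}
    (ha : cnt a l = 0) (hb : cnt b l = 1) :
    l.filter (fun y => decide (y = a ∨ y = b)) = [b] := by
  apply single_list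
  · intro x hx
    simpa using (List.mem_filter.1 hx).2
  · rw [cnt_filter (by simp)]; exact ha
  · rw [cnt_filter (by simp)]; exact hb

omit [DecidableEq α] in
lemma chain'_ne_iff {a b : α} (hab : a ≠ b) {f1 f2 f3 : List α}
    (h1 : f1 = [a, b] ∨ f1 = [b, a]) (h2 : f2 = [a, b] ∨ f2 = [b, a])
    (h3 : f3 = [a, b] ∨ f3 = [b, a]) :
    (f1 ++ f2 ++ f3).Chain' (· ≠ ·) ↔ (f1 = f2 ∧ f2 = f3) := by
  rcases h1 with rfl | rfl <;> rcases h2 with rfl | rfl <;> rcases h3 with rfl | rfl <;>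
    simp [List.Chain', List.isChain_cons_cons, hab, hab.symm]

lemma filter_beq_of_nodup (i : α) (l : List α) (hl : l.Nodup) :
    l.filter (fun k => decide (k = i)) = if i ∈ l then [i] else [] := by
  induction l with
  | nil => simp
  | cons a l ih =>
    rcases List.nodup_cons.1 hl with ⟨ha, hl'⟩
    by_cases hai : a = i
    · subst hai
      simp [List.filter_cons, ih hl', ha]
    · simp [List.filter_cons, hai, ih hl', List.mem_cons, Ne.symm hai]

end Generic

section Construction
variable {m : ℕ}

abbrev VV (m : ℕ) := (Fin m ⊕ Fin m) ⊕ Unit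

def va (i : Fin m) : VV m := .inl (.inl i)
def vb (i : Fin m) : VV m := .inl (.inr i)
def vx : VV m := .inr ()

lemma va_inj : Function.Injective (va (m := m)) := by
  intro i j h; simpa [va] using h

lemma vb_inj : Function.Injective (vb (m := m)) := by
  intro i j h; simpa [vb] using h

def idxL (m : ℕ) : List (Fin m) := (List.finRange m).filter fun k => decide (1 < k.val)

lemma cnt_idxL (i : Fin m) : cnt i (idxL m) = if 1 < i.val then 1 else 0 := by
  by_cases h : 1 < i.val
  · rw [if_pos h, idxL, cnt_filter (by simpa using h)]
    exact cnt_eq_one_of_mem (List.nodup_finRange m) (List.mem_finRange i)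
  · rw [if_neg h, cnt_eq_zero]
    simp [idxL, h]

lemma idxL_filter (i : Fin m) :
    (idxL m).filter (fun k => decide (k = i)) = if 1 < i.val then [i] else [] := by
  rw [filter_beq_of_nodup i (idxL m) ((List.nodup_finRange m).filter _)]
  simp [idxL]

def LA (m : ℕ) : List (VV m) := (idxL m).map va
def LB (m : ℕ) : List (VV m) := (idxL m).map vb

lemma cnt_LA_va (i : Fin m) : cnt (va i) (LA m) = if 1 < i.val then 1 else 0 := by
  rw [LA, cnt_map_of_injective va va_inj, cnt_idxL]

lemma cnt_LB_vb (i : Fin m) : cnt (vb i) (LB m) = if 1 < i.val then 1 else 0 := by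
  rw [LB, cnt_map_of_injective vb vb_inj, cnt_idxL]

lemma cnt_LA_vb (i : Fin m) : cnt (vb i) (LA m) = 0 := by
  rw [cnt_eq_zero]; simp [LA, va, vb]

lemma cnt_LB_va (i : Fin m) : cnt (va i) (LB m) = 0 := by
  rw [cnt_eq_zero]; simp [LB, va, vb]

lemma cnt_LA_vx : cnt vx (LA m) = 0 := by
  rw [cnt_eq_zero]; simp [LA, va, vx]

lemma cnt_LB_vx : cnt vx (LB m) = 0 := by
  rw [cnt_eq_zero]; simp [LB, vb, vx]

lemma filter_LA_eq (p : VV m → Bool) (i : Fin m) (h : ∀ k : Fin m, p (va k) = decide (k = i)) :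
    (LA m).filter p = if 1 < i.val then [va i] else [] := by
  rw [LA, List.filter_map]
  rw [show (p ∘ va) = (fun k : Fin m => p (va k)) from rfl]
  rw [List.filter_congr (fun k _ => h k), idxL_filter]
  split <;> simp

lemma filter_LB_eq (p : VV m → Bool) (i : Fin m) (h : ∀ k : Fin m, p (vb k) = decide (k = i)) :
    (LB m).filter p = if 1 < i.val then [vb i] else [] := by
  rw [LB, List.filter_map]
  rw [show (p ∘ vb) = (fun k : Fin m => p (vb k)) from rfl]
  rw [List.filter_congr (fun k _ => h k), idxL_filter]
  split <;> simp

lemma filter_LA_nil (p : VV m → Bool) (h : ∀ k : Fin m, p (va k) = false) :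
    (LA m).filter p = [] := by
  rw [LA, List.filter_map]
  rw [show (p ∘ va) = (fun k : Fin m => p (va k)) from rfl]
  rw [List.filter_congr (q := fun _ => false) (fun k _ => h k)]
  simp

lemma filter_LB_nil (p : VV m → Bool) (h : ∀ k : Fin m, p (vb k) = false) :
    (LB m).filter p = [] := by
  rw [LB, List.filter_map]
  rw [show (p ∘ vb) = (fun k : Fin m => p (vb k)) from rfl]
  rw [List.filter_congr (q := fun _ => false) (fun k _ => h k)]
  simp

end Construction

section Main
open List

variable {m : ℕ}

def T1 (m : ℕ) (h1 : 1 < m) : List (VV m) :=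
  va ⟨0, by omega⟩ :: (LA m ++ vb ⟨1, h1⟩ :: va ⟨1, h1⟩ :: (LB m ++ [vb ⟨0, by omega⟩]))

def T3 (m : ℕ) (h1 : 1 < m) : List (VV m) :=
  vb ⟨1, h1⟩ :: (LB m ++ va ⟨0, by omega⟩ :: vb ⟨0, by omega⟩ :: (LA m ++ [va ⟨1, h1⟩]))

def P1 (m : ℕ) (h1 : 1 < m) : List (VV m) := vx :: T1 m h1
def P3 (m : ℕ) (h1 : 1 < m) : List (VV m) := vx :: T3 m h1

lemma cnt_T1_va (h1 : 1 < m) (i : Fin m) : cnt (va i) (T1 m h1) = 1 := by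
  have hi := i.isLt
  simp only [T1, cnt_cons, cnt_append, cnt_LA_va, cnt_LB_va, cnt_nil]
  have e0 : (va ⟨0, by omega⟩ = va i) ↔ i.val = 0 := by
    simp [va, Fin.ext_iff, eq_comm]
  have e1 : (va ⟨1, h1⟩ = va i) ↔ i.val = 1 := by
    simp [va, Fin.ext_iff, eq_comm]
  have eb0 : ¬(vb ⟨0, by omega⟩ = va i) := by simp [va, vb]
  have eb1 : ¬(vb ⟨1, h1⟩ = va i) := by simp [va, vb]
  rw [if_congr e0 rfl rfl, if_congr e1 rfl rfl, if_neg eb0, if_neg eb1]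
  split_ifs <;> omega

lemma cnt_T1_vb (h1 : 1 < m) (i : Fin m) : cnt (vb i) (T1 m h1) = 1 := by
  have hi := i.isLt
  simp only [T1, cnt_cons, cnt_append, cnt_LB_vb, cnt_LA_vb, cnt_nil]
  have e0 : (vb ⟨0, by omega⟩ = vb i) ↔ i.val = 0 := by
    simp [vb, Fin.ext_iff, eq_comm]
  have e1 : (vb ⟨1, h1⟩ = vb i) ↔ i.val = 1 := by
    simp [vb, Fin.ext_iff, eq_comm]
  have ea0 : ¬(va ⟨0, by omega⟩ = vb i) := by simp [va, vb]
  have ea1 : ¬(va ⟨1, h1⟩ = vb i) := by simp [va, vb]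
  rw [if_congr e0 rfl rfl, if_congr e1 rfl rfl, if_neg ea0, if_neg ea1]
  split_ifs <;> omega

lemma cnt_T1_vx (h1 : 1 < m) : cnt vx (T1 m h1) = 0 := by
  simp only [T1, cnt_cons, cnt_append, cnt_LA_vx, cnt_LB_vx, cnt_nil]
  have : ∀ (k : Fin m), ¬(va k = vx) ∧ ¬(vb k = vx) := by
    intro k; constructor <;> simp [va, vb, vx]
  rw [if_neg (this _).1, if_neg (this _).1, if_neg (this _).2, if_neg (this _).2]

lemma cnt_T3_va (h1 : 1 < m) (i : Fin m) : cnt (va i) (T3 m h1) = 1 := by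
  have hi := i.isLt
  simp only [T3, cnt_cons, cnt_append, cnt_LA_va, cnt_LB_va, cnt_nil]
  have e0 : (va ⟨0, by omega⟩ = va i) ↔ i.val = 0 := by
    simp [va, Fin.ext_iff, eq_comm]
  have e1 : (va ⟨1, h1⟩ = va i) ↔ i.val = 1 := by
    simp [va, Fin.ext_iff, eq_comm]
  have eb0 : ¬(vb ⟨0, by omega⟩ = va i) := by simp [va, vb]
  have eb1 : ¬(vb ⟨1, h1⟩ = va i) := by simp [va, vb]
  rw [if_congr e0 rfl rfl, if_congr e1 rfl rfl, if_neg eb0, if_neg eb1]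
  split_ifs <;> omega

lemma cnt_T3_vb (h1 : 1 < m) (i : Fin m) : cnt (vb i) (T3 m h1) = 1 := by
  have hi := i.isLt
  simp only [T3, cnt_cons, cnt_append, cnt_LB_vb, cnt_LA_vb, cnt_nil]
  have e0 : (vb ⟨0, by omega⟩ = vb i) ↔ i.val = 0 := by
    simp [vb, Fin.ext_iff, eq_comm]
  have e1 : (vb ⟨1, h1⟩ = vb i) ↔ i.val = 1 := by
    simp [vb, Fin.ext_iff, eq_comm]
  have ea0 : ¬(va ⟨0, by omega⟩ = vb i) := by simp [va, vb]
  have ea1 : ¬(va ⟨1, h1⟩ = vb i) := by simp [va, vb]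
  rw [if_congr e0 rfl rfl, if_congr e1 rfl rfl, if_neg ea0, if_neg ea1]
  split_ifs <;> omega

lemma cnt_T3_vx (h1 : 1 < m) : cnt vx (T3 m h1) = 0 := by
  simp only [T3, cnt_cons, cnt_append, cnt_LA_vx, cnt_LB_vx, cnt_nil]
  have : ∀ (k : Fin m), ¬(va k = vx) ∧ ¬(vb k = vx) := by
    intro k; constructor <;> simp [va, vb, vx]
  rw [if_neg (this _).1, if_neg (this _).1, if_neg (this _).2, if_neg (this _).2]

lemma cnt_P1 (h1 : 1 < m) (v : VV m) : cnt v (P1 m h1) = 1 := by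
  rcases v with ((i | i) | ⟨⟩)
  · rw [show (Sum.inl (Sum.inl i) : VV m) = va i from rfl, P1, cnt_cons, cnt_T1_va,
      if_neg (by simp [vx, va])]
  · rw [show (Sum.inl (Sum.inr i) : VV m) = vb i from rfl, P1, cnt_cons, cnt_T1_vb,
      if_neg (by simp [vx, vb])]
  · rw [P1, cnt_cons]
    rw [show (Sum.inr () : VV m) = vx from rfl, cnt_T1_vx, if_pos rfl]

lemma cnt_P3 (h1 : 1 < m) (v : VV m) : cnt v (P3 m h1) = 1 := by
  rcases v with ((i | i) | ⟨⟩)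
  · rw [show (Sum.inl (Sum.inl i) : VV m) = va i from rfl, P3, cnt_cons, cnt_T3_va,
      if_neg (by simp [vx, va])]
  · rw [show (Sum.inl (Sum.inr i) : VV m) = vb i from rfl, P3, cnt_cons, cnt_T3_vb,
      if_neg (by simp [vx, vb])]
  · rw [P3, cnt_cons]
    rw [show (Sum.inr () : VV m) = vx from rfl, cnt_T3_vx, if_pos rfl]


lemma filter_T1 (h1 : 1 < m) (p : VV m → Bool) :
    (T1 m h1).filter p =
      (if p (va ⟨0, by omega⟩) then [va ⟨0, by omega⟩] else []) ++ (LA m).filter p ++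
      (if p (vb ⟨1, h1⟩) then [vb ⟨1, h1⟩] else []) ++
      (if p (va ⟨1, h1⟩) then [va ⟨1, h1⟩] else []) ++
      (LB m).filter p ++ (if p (vb ⟨0, by omega⟩) then [vb ⟨0, by omega⟩] else []) := by
  simp only [T1, List.filter_cons, List.filter_append]
  split_ifs <;> simp

lemma filter_T3 (h1 : 1 < m) (p : VV m → Bool) :
    (T3 m h1).filter p =
      (if p (vb ⟨1, h1⟩) then [vb ⟨1, h1⟩] else []) ++ (LB m).filter p ++
      (if p (va ⟨0, by omega⟩) then [va ⟨0, by omega⟩] else []) ++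
      (if p (vb ⟨0, by omega⟩) then [vb ⟨0, by omega⟩] else []) ++
      (LA m).filter p ++ (if p (va ⟨1, h1⟩) then [va ⟨1, h1⟩] else []) := by
  simp only [T3, List.filter_cons, List.filter_append]
  split_ifs <;> simp

lemma filter_P1 (h1 : 1 < m) (p : VV m → Bool) (hx : p vx = false) :
    (P1 m h1).filter p = (T1 m h1).filter p := by
  simp [P1, List.filter_cons, hx]

lemma filter_P3 (h1 : 1 < m) (p : VV m → Bool) (hx : p vx = false) :
    (P3 m h1).filter p = (T3 m h1).filter p := by
  simp [P3, List.filter_cons, hx]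


lemma cnt_T1' (h1 : 1 < m) (v : VV m) (hv : v ≠ vx) : cnt v (T1 m h1) = 1 := by
  rcases v with ((i | i) | ⟨⟩)
  · exact cnt_T1_va h1 i
  · exact cnt_T1_vb h1 i
  · exact absurd rfl hv

lemma cnt_T3' (h1 : 1 < m) (v : VV m) (hv : v ≠ vx) : cnt v (T3 m h1) = 1 := by
  rcases v with ((i | i) | ⟨⟩)
  · exact cnt_T3_va h1 i
  · exact cnt_T3_vb h1 i
  · exact absurd rfl hv

lemma x_key (h1 : 1 < m) (v : VV m) (hv : v ≠ vx) :
    ((P1 m h1).filter (fun y => decide (y = vx ∨ y = v)) ++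
      (P1 m h1).filter (fun y => decide (y = vx ∨ y = v)) ++
      (P3 m h1).filter (fun y => decide (y = vx ∨ y = v))).Chain' (· ≠ ·) := by
  have hx : (fun y : VV m => decide (y = vx ∨ y = v)) vx = true := by simp
  have e1 : (P1 m h1).filter (fun y => decide (y = vx ∨ y = v)) = [vx, v] := by
    rw [P1, List.filter_cons, if_pos hx,
      filter_single (cnt_T1_vx h1) (cnt_T1' h1 v hv)]
  have e3 : (P3 m h1).filter (fun y => decide (y = vx ∨ y = v)) = [vx, v] := by
    rw [P3, List.filter_cons, if_pos hx,
      filter_single (cnt_T3_vx h1) (cnt_T3' h1 v hv)]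
  rw [e1, e3]
  simp [List.Chain', List.isChain_cons_cons, hv, Ne.symm hv]

lemma cliqueA_key (h1 : 1 < m) (i j : Fin m) (hij : i ≠ j) :
    ((P1 m h1).filter (fun y => decide (y = va i ∨ y = va j)) ++
      (P1 m h1).filter (fun y => decide (y = va i ∨ y = va j)) ++
      (P3 m h1).filter (fun y => decide (y = va i ∨ y = va j))).Chain' (· ≠ ·) := by
  set p : VV m → Bool := fun y => decide (y = va i ∨ y = va j) with hp
  have hb : ∀ k : Fin m, p (vb k) = false := by intro k; simp [hp, va, vb]
  have hx : p vx = false := by simp [hp, va, vx]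
  have e13 : (T1 m h1).filter p = (T3 m h1).filter p := by
    rw [filter_T1, filter_T3, filter_LB_nil p hb]
    simp [hb]
  have hne : va i ≠ va j := fun h => hij (va_inj h)
  have hg := filter_pair hne (cnt_T1_va h1 i) (cnt_T1_va h1 j)
  rw [filter_P1 _ _ hx, filter_P3 _ _ hx, ← e13]
  rw [← hp] at hg
  rcases hg with h | h <;> rw [h] <;> simp [List.Chain', List.isChain_cons_cons, hne, Ne.symm hne]

lemma cliqueB_key (h1 : 1 < m) (i j : Fin m) (hij : i ≠ j) :
    ((P1 m h1).filter (fun y => decide (y = vb i ∨ y = vb j)) ++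
      (P1 m h1).filter (fun y => decide (y = vb i ∨ y = vb j)) ++
      (P3 m h1).filter (fun y => decide (y = vb i ∨ y = vb j))).Chain' (· ≠ ·) := by
  set p : VV m → Bool := fun y => decide (y = vb i ∨ y = vb j) with hp
  have ha : ∀ k : Fin m, p (va k) = false := by intro k; simp [hp, va, vb]
  have hx : p vx = false := by simp [hp, vb, vx]
  have e13 : (T1 m h1).filter p = (T3 m h1).filter p := by
    rw [filter_T1, filter_T3, filter_LA_nil p ha]
    simp [ha]
  have hne : vb i ≠ vb j := fun h => hij (vb_inj h)
  have hg := filter_pair hne (cnt_T1_vb h1 i) (cnt_T1_vb h1 j)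
  rw [filter_P1 _ _ hx, filter_P3 _ _ hx, ← e13]
  rw [← hp] at hg
  rcases hg with h | h <;> rw [h] <;> simp [List.Chain', List.isChain_cons_cons, hne, Ne.symm hne]


lemma cross_key (h1 : 1 < m) (i j : Fin m) :
    ((P1 m h1).filter (fun y => decide (y = va i ∨ y = vb j)) ++
      (P1 m h1).filter (fun y => decide (y = va i ∨ y = vb j)) ++
      (P3 m h1).filter (fun y => decide (y = va i ∨ y = vb j))).Chain' (· ≠ ·) ↔
      (i = j ∧ j.val < 2) := by
  set p : VV m → Bool := fun y => decide (y = va i ∨ y = vb j) with hp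
  have hx : p vx = false := by simp [hp, va, vb, vx]
  have hpa : ∀ k : Fin m, p (va k) = decide (k = i) := by
    intro k; simp [hp, va, vb]
  have hpb : ∀ k : Fin m, p (vb k) = decide (k = j) := by
    intro k; simp [hp, va, vb]
  have fLA : (LA m).filter p = if 1 < i.val then [va i] else [] := filter_LA_eq p i hpa
  have fLB : (LB m).filter p = if 1 < j.val then [vb j] else [] := filter_LB_eq p j hpb
  rw [filter_P1 _ _ hx, filter_P3 _ _ hx, filter_T1, filter_T3, fLA, fLB]
  by_cases hi0 : i.val = 0
  · by_cases hj0 : j.val = 0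
    · -- (0,0)
      have c0a : p (va ⟨0, by omega⟩) = true := by
        rw [hpa]; simp only [decide_eq_true_eq, Fin.ext_iff, Fin.val_mk]; omega
      have c1a : p (va ⟨1, h1⟩) = false := by
        rw [hpa]; simp only [decide_eq_false_iff_not, Fin.ext_iff, Fin.val_mk]; omega
      have c0b : p (vb ⟨0, by omega⟩) = true := by
        rw [hpb]; simp only [decide_eq_true_eq, Fin.ext_iff, Fin.val_mk]; omega
      have c1b : p (vb ⟨1, h1⟩) = false := by
        rw [hpb]; simp only [decide_eq_false_iff_not, Fin.ext_iff, Fin.val_mk]; omega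
      simp only [c0a, c1a, c0b, c1b, if_true, if_false,
        show ¬(1 < i.val) from by omega, show ¬(1 < j.val) from by omega]
      apply iff_of_true
      · simp [List.Chain', List.isChain_cons_cons, va, vb]
      · exact ⟨Fin.ext (by omega), by omega⟩
    · by_cases hj1 : j.val = 1
      · -- (0,1)
        have c0a : p (va ⟨0, by omega⟩) = true := by
          rw [hpa]; simp only [decide_eq_true_eq, Fin.ext_iff, Fin.val_mk]; omega
        have c1a : p (va ⟨1, h1⟩) = false := by
          rw [hpa]; simp only [decide_eq_false_iff_not, Fin.ext_iff, Fin.val_mk]; omega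
        have c0b : p (vb ⟨0, by omega⟩) = false := by
          rw [hpb]; simp only [decide_eq_false_iff_not, Fin.ext_iff, Fin.val_mk]; omega
        have c1b : p (vb ⟨1, h1⟩) = true := by
          rw [hpb]; simp only [decide_eq_true_eq, Fin.ext_iff, Fin.val_mk]; omega
        simp only [c0a, c1a, c0b, c1b, if_true, if_false,
          show ¬(1 < i.val) from by omega, show ¬(1 < j.val) from by omega]
        apply iff_of_false
        · simp [List.Chain', List.isChain_cons_cons, va, vb]
        · rintro ⟨rfl, hlt⟩; omega
      · -- (0,2)
        have c0a : p (va ⟨0, by omega⟩) = true := by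
          rw [hpa]; simp only [decide_eq_true_eq, Fin.ext_iff, Fin.val_mk]; omega
        have c1a : p (va ⟨1, h1⟩) = false := by
          rw [hpa]; simp only [decide_eq_false_iff_not, Fin.ext_iff, Fin.val_mk]; omega
        have c0b : p (vb ⟨0, by omega⟩) = false := by
          rw [hpb]; simp only [decide_eq_false_iff_not, Fin.ext_iff, Fin.val_mk]; omega
        have c1b : p (vb ⟨1, h1⟩) = false := by
          rw [hpb]; simp only [decide_eq_false_iff_not, Fin.ext_iff, Fin.val_mk]; omega
        simp only [c0a, c1a, c0b, c1b, if_true, if_false,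
          show ¬(1 < i.val) from by omega, show (1 < j.val) from by omega]
        apply iff_of_false
        · simp [List.Chain', List.isChain_cons_cons, va, vb]
        · rintro ⟨rfl, hlt⟩; omega
  · by_cases hi1 : i.val = 1
    · by_cases hj0 : j.val = 0
      · -- (1,0)
        have c0a : p (va ⟨0, by omega⟩) = false := by
          rw [hpa]; simp only [decide_eq_false_iff_not, Fin.ext_iff, Fin.val_mk]; omega
        have c1a : p (va ⟨1, h1⟩) = true := by
          rw [hpa]; simp only [decide_eq_true_eq, Fin.ext_iff, Fin.val_mk]; omega
        have c0b : p (vb ⟨0, by omega⟩) = true := by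
          rw [hpb]; simp only [decide_eq_true_eq, Fin.ext_iff, Fin.val_mk]; omega
        have c1b : p (vb ⟨1, h1⟩) = false := by
          rw [hpb]; simp only [decide_eq_false_iff_not, Fin.ext_iff, Fin.val_mk]; omega
        simp only [c0a, c1a, c0b, c1b, if_true, if_false,
          show ¬(1 < i.val) from by omega, show ¬(1 < j.val) from by omega]
        apply iff_of_false
        · simp [List.Chain', List.isChain_cons_cons, va, vb]
        · rintro ⟨rfl, hlt⟩; omega
      · by_cases hj1 : j.val = 1
        · -- (1,1)
          have c0a : p (va ⟨0, by omega⟩) = false := by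
            rw [hpa]; simp only [decide_eq_false_iff_not, Fin.ext_iff, Fin.val_mk]; omega
          have c1a : p (va ⟨1, h1⟩) = true := by
            rw [hpa]; simp only [decide_eq_true_eq, Fin.ext_iff, Fin.val_mk]; omega
          have c0b : p (vb ⟨0, by omega⟩) = false := by
            rw [hpb]; simp only [decide_eq_false_iff_not, Fin.ext_iff, Fin.val_mk]; omega
          have c1b : p (vb ⟨1, h1⟩) = true := by
            rw [hpb]; simp only [decide_eq_true_eq, Fin.ext_iff, Fin.val_mk]; omega
          simp only [c0a, c1a, c0b, c1b, if_true, if_false,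
            show ¬(1 < i.val) from by omega, show ¬(1 < j.val) from by omega]
          apply iff_of_true
          · simp [List.Chain', List.isChain_cons_cons, va, vb]
          · exact ⟨Fin.ext (by omega), by omega⟩
        · -- (1,2)
          have c0a : p (va ⟨0, by omega⟩) = false := by
            rw [hpa]; simp only [decide_eq_false_iff_not, Fin.ext_iff, Fin.val_mk]; omega
          have c1a : p (va ⟨1, h1⟩) = true := by
            rw [hpa]; simp only [decide_eq_true_eq, Fin.ext_iff, Fin.val_mk]; omega
          have c0b : p (vb ⟨0, by omega⟩) = false := by
            rw [hpb]; simp only [decide_eq_false_iff_not, Fin.ext_iff, Fin.val_mk]; omega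
          have c1b : p (vb ⟨1, h1⟩) = false := by
            rw [hpb]; simp only [decide_eq_false_iff_not, Fin.ext_iff, Fin.val_mk]; omega
          simp only [c0a, c1a, c0b, c1b, if_true, if_false,
            show ¬(1 < i.val) from by omega, show (1 < j.val) from by omega]
          apply iff_of_false
          · simp [List.Chain', List.isChain_cons_cons, va, vb]
          · rintro ⟨rfl, hlt⟩; omega
    · by_cases hj0 : j.val = 0
      · -- (2,0)
        have c0a : p (va ⟨0, by omega⟩) = false := by
          rw [hpa]; simp only [decide_eq_false_iff_not, Fin.ext_iff, Fin.val_mk]; omega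
        have c1a : p (va ⟨1, h1⟩) = false := by
          rw [hpa]; simp only [decide_eq_false_iff_not, Fin.ext_iff, Fin.val_mk]; omega
        have c0b : p (vb ⟨0, by omega⟩) = true := by
          rw [hpb]; simp only [decide_eq_true_eq, Fin.ext_iff, Fin.val_mk]; omega
        have c1b : p (vb ⟨1, h1⟩) = false := by
          rw [hpb]; simp only [decide_eq_false_iff_not, Fin.ext_iff, Fin.val_mk]; omega
        simp only [c0a, c1a, c0b, c1b, if_true, if_false,
          show (1 < i.val) from by omega, show ¬(1 < j.val) from by omega]
        apply iff_of_false
        · simp [List.Chain', List.isChain_cons_cons, va, vb]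
        · rintro ⟨rfl, hlt⟩; omega
      · by_cases hj1 : j.val = 1
        · -- (2,1)
          have c0a : p (va ⟨0, by omega⟩) = false := by
            rw [hpa]; simp only [decide_eq_false_iff_not, Fin.ext_iff, Fin.val_mk]; omega
          have c1a : p (va ⟨1, h1⟩) = false := by
            rw [hpa]; simp only [decide_eq_false_iff_not, Fin.ext_iff, Fin.val_mk]; omega
          have c0b : p (vb ⟨0, by omega⟩) = false := by
            rw [hpb]; simp only [decide_eq_false_iff_not, Fin.ext_iff, Fin.val_mk]; omega
          have c1b : p (vb ⟨1, h1⟩) = true := by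
            rw [hpb]; simp only [decide_eq_true_eq, Fin.ext_iff, Fin.val_mk]; omega
          simp only [c0a, c1a, c0b, c1b, if_true, if_false,
            show (1 < i.val) from by omega, show ¬(1 < j.val) from by omega]
          apply iff_of_false
          · simp [List.Chain', List.isChain_cons_cons, va, vb]
          · rintro ⟨rfl, hlt⟩; omega
        · -- (2,2)
          have c0a : p (va ⟨0, by omega⟩) = false := by
            rw [hpa]; simp only [decide_eq_false_iff_not, Fin.ext_iff, Fin.val_mk]; omega
          have c1a : p (va ⟨1, h1⟩) = false := by
            rw [hpa]; simp only [decide_eq_false_iff_not, Fin.ext_iff, Fin.val_mk]; omega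
          have c0b : p (vb ⟨0, by omega⟩) = false := by
            rw [hpb]; simp only [decide_eq_false_iff_not, Fin.ext_iff, Fin.val_mk]; omega
          have c1b : p (vb ⟨1, h1⟩) = false := by
            rw [hpb]; simp only [decide_eq_false_iff_not, Fin.ext_iff, Fin.val_mk]; omega
          simp only [c0a, c1a, c0b, c1b, if_true, if_false,
            show (1 < i.val) from by omega, show (1 < j.val) from by omega]
          apply iff_of_false
          · simp [List.Chain', List.isChain_cons_cons, va, vb]
          · rintro ⟨rfl, hlt⟩; omega


lemma pred_comm (a b : VV m) :
    (fun y : VV m => decide (y = a ∨ y = b)) = (fun y : VV m => decide (y = b ∨ y = a)) :=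
  funext fun y => decide_eq_decide.2 or_comm

end Main
end HGraphAux

section Adjacency
open HGraphAux

variable {m : ℕ}

lemma HGraphAux.adj_x (v : VV m) (h : v ≠ vx) : (HGraph m).Adj vx v := by
  rw [HGraph, SimpleGraph.fromRel_adj]
  exact ⟨fun e => h e.symm, Or.inl (Or.inr (Or.inr (Or.inl rfl)))⟩

lemma HGraphAux.adj_aa (i j : Fin m) (hij : i ≠ j) : (HGraph m).Adj (va i) (va j) := by
  rw [HGraph, SimpleGraph.fromRel_adj]
  exact ⟨fun e => hij (va_inj e), Or.inl (Or.inl ⟨i, j, hij, rfl, rfl⟩)⟩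

lemma HGraphAux.adj_bb (i j : Fin m) (hij : i ≠ j) : (HGraph m).Adj (vb i) (vb j) := by
  rw [HGraph, SimpleGraph.fromRel_adj]
  exact ⟨fun e => hij (vb_inj e), Or.inl (Or.inr (Or.inl ⟨i, j, hij, rfl, rfl⟩))⟩

lemma HGraphAux.adj_ab_iff (i j : Fin m) :
    (HGraph m).Adj (va i) (vb j) ↔ (i = j ∧ j.val < 2) := by
  rw [HGraph, SimpleGraph.fromRel_adj]
  simp only [va, vb]
  constructor
  · rintro ⟨hne, h | h⟩
    · rcases h with ⟨i', j', _, h1', h2'⟩ | ⟨i', j', _, h1', h2'⟩ | h | ⟨i', hlt, h1', h2'⟩ <;>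
        first
        | (simp at h1' h2'; exact ⟨(h1'.symm.trans h2'.symm.symm : i = j), by
            subst h1' h2'; omega⟩)
        | simp_all
    · rcases h with ⟨i', j', _, h1', h2'⟩ | ⟨i', j', _, h1', h2'⟩ | h | ⟨i', hlt, h1', h2'⟩ <;>
        simp_all
  · rintro ⟨rfl, hlt⟩
    exact ⟨by simp, Or.inl (Or.inr (Or.inr (Or.inr ⟨i, hlt, rfl, rfl⟩)))⟩

end Adjacency

/-- For `m ≥ 2`, the graph `H` is permutationally 3-representable. -/
theorem HGraph_perm_three_representable (m : ℕ) (hm : 2 ≤ m) :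
    PermRepresentable (HGraph m) 3 := by
  classical
  have h1 : 1 < m := hm
  open HGraphAux in
  refine ⟨![P1 m h1, P1 m h1, P3 m h1], ?_, ?_⟩
  · intro i v
    fin_cases i <;>
      simp only [Matrix.cons_val_zero, Matrix.cons_val_one, Matrix.head_cons,
        Matrix.cons_val_two, Matrix.tail_cons] <;>
      rw [count_eq_cnt] <;>
      first
      | exact cnt_P1 h1 v
      | exact cnt_P3 h1 v
  · have hW : (List.ofFn ![P1 m h1, P1 m h1, P3 m h1]).flatten =
        P1 m h1 ++ P1 m h1 ++ P3 m h1 := by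
      simp [List.ofFn_succ]
    rw [hW]
    constructor
    · intro v
      exact List.mem_append_left _ (List.mem_append_left _ (mem_of_cnt_eq_one (cnt_P1 h1 v)))
    · intro a b hab
      show _ ↔ Alternates _ a b
      rw [Alternates]
      rw [List.filter_append, List.filter_append]
      rcases a with ((i | i) | ⟨⟩) <;> rcases b with ((j | j) | ⟨⟩)
      · -- a–a
        rw [show (Sum.inl (Sum.inl i) : VV m) = va i from rfl,
          show (Sum.inl (Sum.inl j) : VV m) = va j from rfl]
        have hij : i ≠ j := fun e => hab (by rw [e])
        exact iff_of_true (adj_aa i j hij) (cliqueA_key h1 i j hij)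
      · -- a–b
        rw [show (Sum.inl (Sum.inl i) : VV m) = va i from rfl,
          show (Sum.inl (Sum.inr j) : VV m) = vb j from rfl]
        exact (adj_ab_iff i j).trans (cross_key h1 i j).symm
      · -- a–x
        rw [show (Sum.inl (Sum.inl i) : VV m) = va i from rfl,
          show (Sum.inr () : VV m) = vx from rfl, pred_comm (va i) vx]
        have hv : va i ≠ vx := by simp [va, vx]
        exact iff_of_true ((adj_x (va i) hv).symm) (x_key h1 (va i) hv)
      · -- b–a
        rw [show (Sum.inl (Sum.inr i) : VV m) = vb i from rfl,
          show (Sum.inl (Sum.inl j) : VV m) = va j from rfl, pred_comm (vb i) (va j)]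
        rw [(HGraph m).adj_comm]
        exact (adj_ab_iff j i).trans (cross_key h1 j i).symm
      · -- b–b
        rw [show (Sum.inl (Sum.inr i) : VV m) = vb i from rfl,
          show (Sum.inl (Sum.inr j) : VV m) = vb j from rfl]
        have hij : i ≠ j := fun e => hab (by rw [e])
        exact iff_of_true (adj_bb i j hij) (cliqueB_key h1 i j hij)
      · -- b–x
        rw [show (Sum.inl (Sum.inr i) : VV m) = vb i from rfl,
          show (Sum.inr () : VV m) = vx from rfl, pred_comm (vb i) vx]
        have hv : vb i ≠ vx := by simp [vb, vx]
        exact iff_of_true ((adj_x (vb i) hv).symm) (x_key h1 (vb i) hv)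
      · -- x–a
        rw [show (Sum.inr () : VV m) = vx from rfl,
          show (Sum.inl (Sum.inl j) : VV m) = va j from rfl]
        have hv : va j ≠ vx := by simp [va, vx]
        exact iff_of_true (adj_x (va j) hv) (x_key h1 (va j) hv)
      · -- x–b
        rw [show (Sum.inr () : VV m) = vx from rfl,
          show (Sum.inl (Sum.inr j) : VV m) = vb j from rfl]
        have hv : vb j ≠ vx := by simp [vb, vx]
        exact iff_of_true (adj_x (vb j) hv) (x_key h1 (vb j) hv)
      · exact absurd rfl hab
end
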